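/- arXiv:2505.12943 — 11 statements merged into one kernel-verified Lean document; each statement's English description precedes it below -/
import Mathlib

section
/- Fix an integer k ≥ 1 and set n = 2k+1. Let M : (Fin n → C) → PMF C be a mechanism that is anonymous (M (b ∘ π) = M b for every permutation π : Equiv.Perm (Fin n)) and neutral (for every isometric equivalence f : C ≃ᵢ C and every profile b, M (f ∘ b) = (M b).map f). Then for every profile b : Fin n → C there exists a profile b' : Fin n → C such that: (i) there is a nondecreasing function β : Fin n → ℝ with β i ∈ [−1/2, 1/2) for all i, β at the middle index k equal to 0, and b' i equal to the image of β i under the quotient map ℝ → C; (ii) the point 0 ∈ C minimizes the social cost at b', i.e., sc_{b'}(0) ≤ sc_{b'}(w) for every point w ∈ C; and (iii) sc_{b'}(M b') = sc_b(M b) and sc_{b'}(0) = inf over points w ∈ C of sc_b(w). In particular M has the same approximation ratio at b and at b'. -/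
open MeasureTheory

noncomputable section

/-- The cycle of circumference 1. -/
abbrev Cyc : Type := AddCircle (1 : ℝ)

/-- Cost of a lottery `l` to an agent with ideal point `v`. -/
def cost (v : Cyc) (l : PMF Cyc) : ℝ := ∫ x, dist v x ∂ l.toMeasure

/-- Social cost of a lottery `l` at profile `b`. -/
def scLot {n : ℕ} (b : Fin n → Cyc) (l : PMF Cyc) : ℝ := ∑ i, cost (b i) l

/-- Social cost of a point `w` at profile `b`. -/
def scPt {n : ℕ} (b : Fin n → Cyc) (w : Cyc) : ℝ := ∑ i, dist (b i) w

/-- Strategyproofness of a mechanism. -/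
def Strategyproof {n : ℕ} (M : (Fin n → Cyc) → PMF Cyc) : Prop :=
  ∀ (b : Fin n → Cyc) (i : Fin n) (v : Cyc),
    cost (b i) (M b) ≤ cost (b i) (M (Function.update b i v))

instance : Fact ((0:ℝ) < 1) := ⟨one_pos⟩

lemma Cyc.norm_coe_le (x : ℝ) : ‖(x : Cyc)‖ ≤ |x| := by
  simpa using QuotientAddGroup.norm_mk_le_norm (S := AddSubgroup.zmultiples (1:ℝ)) (m := x)

lemma Cyc.norm_coe_eq {x : ℝ} (h1 : -(1/2) ≤ x) (h2 : x < 1/2) : ‖(x : Cyc)‖ = |x| := by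
  rw [AddCircle.norm_eq]
  have : round ((1:ℝ)⁻¹ * x) = 0 := by
    rw [round_eq, inv_one, Int.floor_eq_zero_iff]
    constructor <;> [linarith; linarith]
  rw [this]
  norm_num

lemma Cyc.dist_coe_coe_le (x y : ℝ) : dist (x : Cyc) (y : Cyc) ≤ |x - y| := by
  rw [dist_eq_norm]
  have : (x : Cyc) - (y : Cyc) = ((x - y : ℝ) : Cyc) := by rw [← QuotientAddGroup.mk_sub]
  rw [this]
  exact Cyc.norm_coe_le _

lemma Cyc.dist_coe_zero {x : ℝ} (h1 : -(1/2) ≤ x) (h2 : x < 1/2) :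
    dist (x : Cyc) (0 : Cyc) = |x| := by
  rw [dist_eq_norm, sub_zero]
  exact Cyc.norm_coe_eq h1 h2

lemma cost_map (f : Cyc ≃ᵢ Cyc) (v : Cyc) (p : PMF Cyc) :
    cost (f v) (p.map f) = cost v p := by
  unfold cost
  rw [← PMF.toMeasure_map (f := ⇑f) p f.continuous.measurable,
    integral_map f.continuous.measurable.aemeasurable
      ((continuous_const.dist continuous_id').aestronglyMeasurable)]
  simp only [f.isometry.dist_eq]

lemma median_strict {k : ℕ} (β : Fin (2 * k + 1) → ℝ) (hβ : Monotone β) (x : ℝ)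
    (hx : x ≠ β ⟨k, by omega⟩) :
    ∑ i, |β i - β ⟨k, by omega⟩| < ∑ i, |β i - x| := by
  set K : Fin (2 * k + 1) := ⟨k, by omega⟩ with hK
  set m := β K with hm
  rw [← sub_pos, ← Finset.sum_sub_distrib]
  rcases lt_or_gt_of_ne hx with hlt | hgt
  · -- x < m
    have huniv : (Finset.univ : Finset (Fin (2 * k + 1))) = Finset.Iio K ∪ Finset.Ici K := by
      ext i; simp [lt_or_ge]
    have hdisj : Disjoint (Finset.Iio K) (Finset.Ici K) := by
      simp only [Finset.disjoint_left, Finset.mem_Iio, Finset.mem_Ici]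
      intro a ha hle; exact absurd hle (not_le.mpr ha)
    rw [huniv, Finset.sum_union hdisj]
    have hcardIio : (Finset.Iio K).card = k := by simp [Fin.card_Iio, hK]
    have hcardIci : (Finset.Ici K).card = k + 1 := by
      rw [Fin.card_Ici]; simp only [hK]; omega
    have hIio : (k : ℝ) * -(m - x) ≤ ∑ i ∈ Finset.Iio K, (|β i - x| - |β i - m|) := by
      have h := Finset.card_nsmul_le_sum (Finset.Iio K)
        (fun i => |β i - x| - |β i - m|) (-(m - x))
        (fun i _ => by
          show -(m - x) ≤ |β i - x| - |β i - m|
          have h1 := abs_sub_abs_le_abs_sub (β i - m) (β i - x)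
          have h2 : |(β i - m) - (β i - x)| = m - x := by
            rw [show (β i - m) - (β i - x) = -(m - x) by ring, abs_neg,
              abs_of_pos (by linarith)]
          rw [h2] at h1; linarith)
      rw [hcardIio] at h
      simpa [nsmul_eq_mul] using h
    have hIci : ∑ i ∈ Finset.Ici K, (|β i - x| - |β i - m|) = ((k : ℝ) + 1) * (m - x) := by
      have heach : ∀ i ∈ Finset.Ici K, |β i - x| - |β i - m| = m - x := by
        intro i hi
        have hmle : m ≤ β i := hβ (Finset.mem_Ici.mp hi)
        rw [abs_of_nonneg (by linarith), abs_of_nonneg (by linarith)]; ring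
      rw [Finset.sum_congr rfl heach, Finset.sum_const, hcardIci, nsmul_eq_mul]
      push_cast; ring
    rw [hIci]; nlinarith
  · -- m < x
    have huniv : (Finset.univ : Finset (Fin (2 * k + 1))) = Finset.Iic K ∪ Finset.Ioi K := by
      ext i; simp [le_or_gt]
    have hdisj : Disjoint (Finset.Iic K) (Finset.Ioi K) := by
      simp only [Finset.disjoint_left, Finset.mem_Iic, Finset.mem_Ioi]
      intro a ha hlt; exact absurd ha (not_le.mpr hlt)
    rw [huniv, Finset.sum_union hdisj]
    have hcardIic : (Finset.Iic K).card = k + 1 := by simp [Fin.card_Iic, hK]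
    have hcardIoi : (Finset.Ioi K).card = k := by
      rw [Fin.card_Ioi]; simp only [hK]; omega
    have hIoi : (k : ℝ) * -(x - m) ≤ ∑ i ∈ Finset.Ioi K, (|β i - x| - |β i - m|) := by
      have h := Finset.card_nsmul_le_sum (Finset.Ioi K)
        (fun i => |β i - x| - |β i - m|) (-(x - m))
        (fun i _ => by
          show -(x - m) ≤ |β i - x| - |β i - m|
          have h1 := abs_sub_abs_le_abs_sub (β i - m) (β i - x)
          have h2 : |(β i - m) - (β i - x)| = x - m := by
            rw [show (β i - m) - (β i - x) = x - m by ring, abs_of_pos (by linarith)]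
          rw [h2] at h1; linarith)
      rw [hcardIoi] at h
      simpa [nsmul_eq_mul] using h
    have hIic : ∑ i ∈ Finset.Iic K, (|β i - x| - |β i - m|) = ((k : ℝ) + 1) * (x - m) := by
      have heach : ∀ i ∈ Finset.Iic K, |β i - x| - |β i - m| = x - m := by
        intro i hi
        have hmle : β i ≤ m := hβ (Finset.mem_Iic.mp hi)
        rw [abs_of_nonpos (by linarith), abs_of_nonpos (by linarith)]; ring
      rw [Finset.sum_congr rfl heach, Finset.sum_const, hcardIic, nsmul_eq_mul]
      push_cast; ring
    rw [hIic]; nlinarith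

/-- Normalization of profiles: for an anonymous and neutral mechanism, every profile can be
replaced by a normalized profile (nondecreasing reports in `[-1/2, 1/2)` with the middle
agent at `0`, and the point `0` minimizing the social cost) with the same social cost of the
mechanism's outcome and whose optimal cost equals the optimal cost of the original profile. -/
theorem exists_normalized_profile (k : ℕ) (hk : 1 ≤ k)
    (M : (Fin (2 * k + 1) → Cyc) → PMF Cyc)
    (hanon : ∀ (b : Fin (2 * k + 1) → Cyc) (π : Equiv.Perm (Fin (2 * k + 1))),
      M (b ∘ π) = M b)
    (hneut : ∀ (f : Cyc ≃ᵢ Cyc) (b : Fin (2 * k + 1) → Cyc),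
      M (fun i => f (b i)) = (M b).map f) :
    ∀ b : Fin (2 * k + 1) → Cyc, ∃ b' : Fin (2 * k + 1) → Cyc,
      (∃ β : Fin (2 * k + 1) → ℝ, Monotone β ∧
        (∀ i, β i ∈ Set.Ico (-(1 / 2) : ℝ) (1 / 2)) ∧
        β ⟨k, by omega⟩ = 0 ∧
        ∀ i, b' i = (β i : Cyc)) ∧
      (∀ w : Cyc, scPt b' (0 : Cyc) ≤ scPt b' w) ∧
      scLot b' (M b') = scLot b (M b) ∧
      scPt b' (0 : Cyc) = ⨅ w : Cyc, scPt b w := by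
  intro b
  classical
  -- a minimizer of the social cost exists
  have hcont : Continuous (scPt b) := by
    unfold scPt
    exact continuous_finset_sum _ (fun i _ => continuous_const.dist continuous_id')
  obtain ⟨w0, -, hw0⟩ := isCompact_univ.exists_isMinOn Set.univ_nonempty hcont.continuousOn
  have hmin : ∀ w, scPt b w0 ≤ scPt b w := fun w => hw0 (Set.mem_univ w)
  -- translate by `-w0`
  set f : Cyc ≃ᵢ Cyc := IsometryEquiv.addRight (-w0) with hf
  have hdist : ∀ (x w : Cyc), dist (f x) w = dist x (w + w0) := by
    intro x w
    simp only [hf, IsometryEquiv.addRight_apply, IsometryEquiv.coe_mk, Equiv.coe_addRight,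
      dist_eq_norm]
    abel_nf
  set c : Fin (2 * k + 1) → Cyc := fun i => f (b i) with hc
  set α : Fin (2 * k + 1) → ℝ :=
    fun i => ((AddCircle.equivIco 1 (-(1/2)) (c i)) : ℝ) with hα
  have hmemα : ∀ j, α j ∈ Set.Ico (-(1 / 2) : ℝ) (1 / 2) := by
    intro j
    have h := (AddCircle.equivIco 1 (-(1/2)) (c j)).2
    exact ⟨h.1, by linarith [h.2]⟩
  have hcoe : ∀ j, ((α j : ℝ) : Cyc) = c j :=
    fun j => (AddCircle.equivIco 1 (-(1/2))).symm_apply_apply (c j)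
  set σ : Equiv.Perm (Fin (2 * k + 1)) := Tuple.sort α with hσ
  set β : Fin (2 * k + 1) → ℝ := α ∘ σ with hβ
  have hmono : Monotone β := Tuple.monotone_sort α
  set b' : Fin (2 * k + 1) → Cyc := fun i => c (σ i) with hb'
  have hb'coe : ∀ i, b' i = (β i : Cyc) := fun i => (hcoe (σ i)).symm
  -- translation identity for social cost of points
  have hscPt : ∀ w, scPt b' w = scPt b (w + w0) := by
    intro w
    unfold scPt
    calc ∑ i, dist (b' i) w = ∑ i, dist (c i) w :=
          Equiv.sum_comp σ (fun j => dist (c j) w)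
      _ = ∑ i, dist (b i) (w + w0) := Finset.sum_congr rfl fun i _ => hdist (b i) w
  -- (ii) zero minimizes the social cost of b'
  have hmin' : ∀ w : Cyc, scPt b' (0 : Cyc) ≤ scPt b' w := by
    intro w
    rw [hscPt, hscPt, zero_add]
    exact hmin (w + w0)
  -- cost of b' at 0 in terms of lifts
  have h0 : scPt b' (0 : Cyc) = ∑ i, |β i| := by
    unfold scPt
    refine Finset.sum_congr rfl fun i _ => ?_
    rw [hb'coe i]
    exact Cyc.dist_coe_zero (hmemα (σ i)).1 (hmemα (σ i)).2
  -- the middle lift is zero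
  have hmed : β ⟨k, by omega⟩ = 0 := by
    by_contra hm0
    have hstrict := median_strict β hmono 0 (Ne.symm hm0)
    have hmsum : scPt b' ((β ⟨k, by omega⟩ : ℝ) : Cyc) ≤ ∑ i, |β i - β ⟨k, by omega⟩| := by
      unfold scPt
      refine Finset.sum_le_sum fun i _ => ?_
      rw [hb'coe i]
      exact Cyc.dist_coe_coe_le _ _
    have hle := hmin' ((β ⟨k, by omega⟩ : ℝ) : Cyc)
    simp only [sub_zero] at hstrict
    linarith [h0 ▸ hle]
  refine ⟨b', ⟨β, hmono, fun i => hmemα (σ i), hmed, hb'coe⟩, hmin', ?_, ?_⟩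
  · -- social cost of the lottery is preserved
    have hM : M b' = (M b).map f := by
      have hb'' : b' = (fun i => f (b i)) ∘ σ := rfl
      rw [hb'', hanon (fun i => f (b i)) σ, hneut f b]
    unfold scLot
    rw [hM]
    calc ∑ i, cost (b' i) ((M b).map f) = ∑ i, cost (b (σ i)) (M b) :=
          Finset.sum_congr rfl fun i _ => cost_map f (b (σ i)) (M b)
      _ = ∑ i, cost (b i) (M b) := Equiv.sum_comp σ (fun j => cost (b j) (M b))
  · -- optimal cost is preserved
    rw [hscPt, zero_add]
    refine le_antisymm (le_ciInf hmin) (ciInf_le ?_ w0)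
    refine ⟨0, ?_⟩
    rintro y ⟨w, rfl⟩
    exact Finset.sum_nonneg fun i _ => dist_nonneg
end
end

section
/- Define d_c : ℝ → ℝ → ℝ by d_c(x,y) = min(|x−y|, 1−|x−y|). Let b be an admissible profile such that the point 0 minimizes the cyclic social cost: Σⱼ d_c(b j, 0) ≤ Σⱼ d_c(b j, v) for every v ∈ [−1/2, 1/2]. Then (1/(2k+1)) · Σᵢ Σⱼ d_c(b i, b j) + Σ_{i=1}^{k} (|b (i−k−1)| − |b (i−k)|) · Σⱼ d_c(b i, b j) + (1 − |b k| − |b (−k)|) · Σⱼ d_c(b 0, b j) + Σ_{i=−k}^{−1} (|b (i+k+1)| − |b (i+k)|) · Σⱼ d_c(b i, b j) ≤ φ(b) · (2 · Σⱼ d_c(b j, 0)). (The left-hand side is the sum of the cyclic social costs of the Random Dictator lottery and of the Proportional Circle Distance lottery at b; hence the approximation ratio of the mixed mechanism RD+PCD at b is at most φ(b).) -/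
open Finset

noncomputable section

/-- The cyclic distance on representatives in `[-1/2, 1/2]`. -/
def dc (x y : ℝ) : ℝ := min |x - y| (1 - |x - y|)

/-- `b : ℤ → ℝ` is a normalized line profile for `2k+1` agents indexed by `{-k, …, k}`:
nondecreasing on `{-k, …, k}`, with values in `[-1/2, 1/2]`, and `b 0 = 0`. -/
def IsNormalized (k : ℤ) (b : ℤ → ℝ) : Prop :=
  (∀ i j : ℤ, -k ≤ i → i ≤ j → j ≤ k → b i ≤ b j) ∧
  (∀ i : ℤ, -k ≤ i → i ≤ k → b i ∈ Set.Icc (-(1 / 2) : ℝ) (1 / 2)) ∧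
  b 0 = 0

/-- A normalized line profile is admissible if some agent's report is nonzero. -/
def IsAdmissible (k : ℤ) (b : ℤ → ℝ) : Prop :=
  IsNormalized k b ∧ ∃ i : ℤ, -k ≤ i ∧ i ≤ k ∧ b i ≠ 0

/-- The numerator `Φ(b)` of the bound `φ(b)` on the approximation ratio of `RD+PCD`. -/
def Phi (k : ℤ) (b : ℤ → ℝ) : ℝ :=
  (∑ i ∈ Finset.Icc (-k) k, (4 * |(i : ℝ)| / (2 * (k : ℝ) + 1)) * |b i|) +
  (∑ j ∈ Finset.Icc (-k) k, |b j|) +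
  (∑ j ∈ Finset.Icc 1 k,
    |b j| * (2 * (k : ℝ) + 1 - 2 * (j : ℝ)) * (|b (j - k - 1)| - |b (j - k)|)) +
  (∑ j ∈ Finset.Icc (-k) (-1),
    |b j| * (2 * (k : ℝ) + 1 + 2 * (j : ℝ)) * (|b (j + k + 1)| - |b (j + k)|))

/-- The denominator `D(b) = 2 Σᵢ |b i|`. -/
def Dd (k : ℤ) (b : ℤ → ℝ) : ℝ := 2 * ∑ i ∈ Finset.Icc (-k) k, |b i|

/-- The bound `φ(b) = Φ(b) / D(b)`. -/
def phi (k : ℤ) (b : ℤ → ℝ) : ℝ := Phi k b / Dd k b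

/-! ### Generic auxiliary lemmas -/

lemma dc_le_abs (x y : ℝ) : dc x y ≤ |x - y| := min_le_left _ _

lemma dc_le_add (x y : ℝ) : dc x y ≤ |x| + |y| := by
  refine (dc_le_abs x y).trans ?_
  have := abs_add_le x (-y)
  simpa [sub_eq_add_neg] using this

lemma dc_neg (x y : ℝ) : dc (-x) (-y) = dc x y := by
  unfold dc
  rw [show -x - -y = -(x - y) by ring, abs_neg]

lemma dc_zero_left (y : ℝ) (h : |y| ≤ 1 / 2) : dc y 0 = |y| := by
  unfold dc
  rw [sub_zero]
  exact min_eq_left (by linarith)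

/-- Splitting a sum over `Icc a c` at `m`. -/
lemma sum_split (f : ℤ → ℝ) {a m c : ℤ} (h1 : a ≤ m + 1) (h2 : m ≤ c) :
    ∑ i ∈ Icc a c, f i = (∑ i ∈ Icc a m, f i) + ∑ i ∈ Icc (m + 1) c, f i := by
  rw [← Finset.sum_union]
  · congr 1
    ext x
    simp only [Finset.mem_union, Finset.mem_Icc]
    omega
  · rw [Finset.disjoint_left]
    intro x hx hx'
    simp only [Finset.mem_Icc] at hx hx'
    omega

/-- Telescoping sum over an integer interval. -/
lemma sum_tele (g : ℤ → ℝ) {a c : ℤ} (h : a ≤ c) :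
    ∑ i ∈ Icc (a + 1) c, (g (i - 1) - g i) = g a - g c := by
  refine Int.le_induction
    (motive := fun n _ => ∑ i ∈ Icc (a + 1) n, (g (i - 1) - g i) = g a - g n) ?_ ?_ c h
  · rw [show Icc (a + 1) a = ∅ from Finset.Icc_eq_empty (by omega)]
    simp
  · intro n hn ih
    show ∑ i ∈ Icc (a + 1) (n + 1), (g (i - 1) - g i) = g a - g (n + 1)
    rw [sum_split (fun i => g (i - 1) - g i) (m := n) (show a + 1 ≤ n + 1 by omega)
        (show n ≤ n + 1 by omega), ih,
      show Icc (n + 1) (n + 1) = {n + 1} from Finset.Icc_self _, Finset.sum_singleton,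
      show n + 1 - 1 = n by ring]
    ring

/-- Exchanging the order of summation over a triangle. -/
lemma sum_triangle (a c : ℤ) (F : ℤ → ℤ → ℝ) :
    ∑ i ∈ Icc a c, ∑ j ∈ Icc (i + 1) c, F i j
      = ∑ j ∈ Icc a c, ∑ i ∈ Icc a (j - 1), F i j := by
  have h1 : ∀ i ∈ Icc a c, ∑ j ∈ Icc (i + 1) c, F i j
      = ∑ j ∈ Icc a c, if i < j then F i j else 0 := by
    intro i hi
    simp only [Finset.mem_Icc] at hi
    rw [← Finset.sum_filter]
    congr 1
    ext x
    simp only [Finset.mem_filter, Finset.mem_Icc]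
    omega
  have h2 : ∀ j ∈ Icc a c, ∑ i ∈ Icc a (j - 1), F i j
      = ∑ i ∈ Icc a c, if i < j then F i j else 0 := by
    intro j hj
    simp only [Finset.mem_Icc] at hj
    rw [← Finset.sum_filter]
    congr 1
    ext x
    simp only [Finset.mem_filter, Finset.mem_Icc]
    omega
  rw [Finset.sum_congr rfl h1, Finset.sum_comm, ← Finset.sum_congr rfl h2]

/-- Sum of a constant over an integer interval. -/
lemma sum_const_Icc (a c : ℤ) (h : a ≤ c + 1) (x : ℝ) :
    ∑ _i ∈ Icc a c, x = ((c : ℝ) + 1 - (a : ℝ)) * x := by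
  rw [Finset.sum_const, nsmul_eq_mul, Int.card_Icc]
  congr 1
  have h3 : ((c + 1 - a).toNat : ℤ) = c + 1 - a := Int.toNat_of_nonneg (by omega)
  exact_mod_cast h3

/-- Reflecting a sum over an interval. -/
lemma sum_reflect (c lo hi : ℤ) (f : ℤ → ℝ) :
    ∑ x ∈ Icc lo hi, f x = ∑ x ∈ Icc (c - hi) (c - lo), f (c - x) := by
  refine Finset.sum_nbij' (fun x => c - x) (fun x => c - x) ?_ ?_ ?_ ?_ ?_ <;>
      intro x hx
  · simp only [Finset.mem_Icc] at hx ⊢; omega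
  · simp only [Finset.mem_Icc] at hx ⊢; omega
  · omega
  · omega
  · congr 1; omega

/-! ### Per-agent cost bound -/

lemma cost_bound (k : ℤ) (hk : 1 ≤ k) (b : ℤ → ℝ)
    (hmono : ∀ i j : ℤ, -k ≤ i → i ≤ j → j ≤ k → b i ≤ b j) (hb0 : b 0 = 0)
    {i : ℤ} (hi1 : 1 ≤ i) (hik : i ≤ k) :
    ∑ j ∈ Icc (-k) k, dc (b i) (b j)
      ≤ (∑ j ∈ Icc (-k) k, |b j|) + (2 * (i : ℝ) - 1) * |b i|
        - 2 * ∑ j ∈ Icc 1 (i - 1), |b j| := by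
  have hnn : ∀ j : ℤ, 0 ≤ j → j ≤ k → 0 ≤ b j := by
    intro j h1 h2
    rw [← hb0]
    exact hmono 0 j (by omega) h1 h2
  have hbi : 0 ≤ b i := hnn i (by omega) hik
  have habs : ∀ j : ℤ, 0 ≤ j → j ≤ k → |b j| = b j := fun j h1 h2 =>
    abs_of_nonneg (hnn j h1 h2)
  have hsplit : ∀ f : ℤ → ℝ, ∑ j ∈ Icc (-k) k, f j
      = (∑ j ∈ Icc (-k) (-1), f j) + (∑ j ∈ Icc 0 (i - 1), f j)
        + ∑ j ∈ Icc i k, f j := by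
    intro f
    rw [sum_split f (show -k ≤ (-1 : ℤ) + 1 by omega) (show (-1 : ℤ) ≤ k by omega),
      show (-1 : ℤ) + 1 = 0 by ring,
      sum_split f (show (0 : ℤ) ≤ (i - 1) + 1 by omega) (show i - 1 ≤ k by omega),
      show i - 1 + 1 = i by ring]
    ring
  rw [hsplit (fun j => dc (b i) (b j)), hsplit (fun j => |b j|)]
  have hA : ∑ j ∈ Icc (-k) (-1), dc (b i) (b j)
      ≤ (∑ j ∈ Icc (-k) (-1), |b j|) + (k : ℝ) * b i := by
    have h1 : ∑ j ∈ Icc (-k) (-1), dc (b i) (b j)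
        ≤ ∑ j ∈ Icc (-k) (-1), (|b j| + b i) := by
      refine Finset.sum_le_sum fun j hj => ?_
      have h2 := dc_le_add (b i) (b j)
      rw [abs_of_nonneg hbi] at h2
      linarith
    rw [Finset.sum_add_distrib, sum_const_Icc (-k) (-1) (by omega) (b i)] at h1
    push_cast at h1 ⊢
    linarith
  have hB : ∑ j ∈ Icc 0 (i - 1), dc (b i) (b j)
      ≤ (∑ j ∈ Icc 0 (i - 1), |b j|) + (i : ℝ) * b i
        - 2 * ∑ j ∈ Icc 1 (i - 1), |b j| := by
    have h1 : ∑ j ∈ Icc 0 (i - 1), dc (b i) (b j)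
        ≤ ∑ j ∈ Icc 0 (i - 1), (|b j| + b i - 2 * |b j|) := by
      refine Finset.sum_le_sum fun j hj => ?_
      simp only [Finset.mem_Icc] at hj
      have hj2 : b j ≤ b i := hmono j i (by omega) (by omega) (by omega)
      have h3 := dc_le_abs (b i) (b j)
      rw [abs_of_nonneg (by linarith : (0:ℝ) ≤ b i - b j)] at h3
      rw [habs j hj.1 (by omega)]
      linarith
    have h2 : ∑ j ∈ Icc 0 (i - 1), (|b j| + b i - 2 * |b j|)
        = (∑ j ∈ Icc 0 (i - 1), |b j|) + (i : ℝ) * b i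
          - 2 * ∑ j ∈ Icc 0 (i - 1), |b j| := by
      rw [Finset.sum_sub_distrib, Finset.sum_add_distrib,
        sum_const_Icc 0 (i - 1) (by omega) (b i), ← Finset.mul_sum]
      push_cast
      ring
    have h3 : ∑ j ∈ Icc 0 (i - 1), |b j| = ∑ j ∈ Icc 1 (i - 1), |b j| := by
      rw [sum_split (fun j => |b j|) (show (0:ℤ) ≤ 0 + 1 by omega)
        (show (0:ℤ) ≤ i - 1 by omega),
        show (0:ℤ) + 1 = 1 by ring, show Icc (0:ℤ) 0 = {0} from Finset.Icc_self _,
        Finset.sum_singleton, hb0]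
      simp
    rw [h2, h3] at h1
    rw [h3]
    linarith
  have hC : ∑ j ∈ Icc i k, dc (b i) (b j)
      ≤ (∑ j ∈ Icc i k, |b j|) - ((k : ℝ) - (i : ℝ) + 1) * b i := by
    have h1 : ∑ j ∈ Icc i k, dc (b i) (b j)
        ≤ ∑ j ∈ Icc i k, (|b j| - b i) := by
      refine Finset.sum_le_sum fun j hj => ?_
      simp only [Finset.mem_Icc] at hj
      have hj2 : b i ≤ b j := hmono i j (by omega) hj.1 hj.2
      have h3 := dc_le_abs (b i) (b j)
      rw [abs_of_nonpos (by linarith : b i - b j ≤ 0)] at h3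
      rw [habs j (by omega) hj.2]
      linarith
    rw [Finset.sum_sub_distrib, sum_const_Icc i k (by omega) (b i)] at h1
    push_cast at h1 ⊢
    linarith
  rw [habs i (by omega) hik]
  push_cast at hA hB hC ⊢
  linarith

/-! ### The bilinear identity for the PCD weights -/

lemma key_swap (k : ℤ) (hk : 1 ≤ k) (P Q : ℤ → ℝ) (hQ0 : Q 0 = 0) :
    ∑ i ∈ Icc 1 k, (Q (k + 1 - i) - Q (k - i)) * ∑ j ∈ Icc 1 (i - 1), P j
      = ∑ i ∈ Icc 1 k, Q (k - i) * P i := by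
  have h1 := sum_triangle 1 k (fun x y => (Q (k + 1 - y) - Q (k - y)) * P x)
  have h2 : ∑ j ∈ Icc 1 k, ∑ x ∈ Icc 1 (j - 1), (Q (k + 1 - j) - Q (k - j)) * P x
      = ∑ i ∈ Icc 1 k, (Q (k + 1 - i) - Q (k - i)) * ∑ j ∈ Icc 1 (i - 1), P j := by
    refine Finset.sum_congr rfl fun j _ => ?_
    rw [Finset.mul_sum]
  have h3 : ∀ i ∈ Icc 1 k, ∑ j ∈ Icc (i + 1) k, (Q (k + 1 - j) - Q (k - j)) * P i
      = Q (k - i) * P i := by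
    intro i hi
    simp only [Finset.mem_Icc] at hi
    rw [← Finset.sum_mul]
    congr 1
    have h4 : ∑ j ∈ Icc (i + 1) k, (Q (k + 1 - j) - Q (k - j))
        = ∑ j ∈ Icc (i + 1) k,
            ((fun t => Q (k - t)) (j - 1) - (fun t => Q (k - t)) j) := by
      refine Finset.sum_congr rfl fun j _ => ?_
      simp only
      rw [show k + 1 - j = k - (j - 1) by ring]
    rw [h4, sum_tele (fun t => Q (k - t)) hi.2]
    simp only [sub_self, hQ0, sub_zero]
  rw [← h2, ← h1, Finset.sum_congr rfl h3]

lemma side_alg (k : ℤ) (hk : 1 ≤ k) (P Q : ℤ → ℝ) (hQ0 : Q 0 = 0) :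
    ∑ i ∈ Icc 1 k, (Q (k + 1 - i) - Q (k - i))
        * ((2 * (i : ℝ) - 1) * P i - 2 * ∑ j ∈ Icc 1 (i - 1), P j)
      = (∑ i ∈ Icc 1 k,
          P i * (2 * (k : ℝ) + 1 - 2 * (i : ℝ)) * (Q (k + 1 - i) - Q (k - i)))
        + ∑ i ∈ Icc 1 k, ((4 * (i : ℝ) - 2 * (k : ℝ) - 2) * Q (k + 1 - i) * P i
            - (4 * (i : ℝ) - 2 * (k : ℝ)) * Q (k - i) * P i) := by
  have e1 : ∑ i ∈ Icc 1 k, (Q (k + 1 - i) - Q (k - i))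
        * ((2 * (i : ℝ) - 1) * P i - 2 * ∑ j ∈ Icc 1 (i - 1), P j)
      = (∑ i ∈ Icc 1 k, (Q (k + 1 - i) - Q (k - i)) * ((2 * (i : ℝ) - 1) * P i))
        - 2 * ∑ i ∈ Icc 1 k, (Q (k + 1 - i) - Q (k - i)) * ∑ j ∈ Icc 1 (i - 1), P j := by
    rw [Finset.mul_sum, ← Finset.sum_sub_distrib]
    refine Finset.sum_congr rfl fun i _ => ?_
    ring
  rw [e1, key_swap k hk P Q hQ0, ← Finset.sum_add_distrib, Finset.mul_sum,
    ← Finset.sum_sub_distrib]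
  refine Finset.sum_congr rfl fun i _ => ?_
  ring

lemma rem_cancel (k : ℤ) (hk : 1 ≤ k) (P Q : ℤ → ℝ) (hP0 : P 0 = 0) (hQ0 : Q 0 = 0) :
    (∑ i ∈ Icc 1 k, ((4 * (i : ℝ) - 2 * (k : ℝ) - 2) * Q (k + 1 - i) * P i
        - (4 * (i : ℝ) - 2 * (k : ℝ)) * Q (k - i) * P i))
      + (∑ i ∈ Icc 1 k, ((4 * (i : ℝ) - 2 * (k : ℝ) - 2) * P (k + 1 - i) * Q i
        - (4 * (i : ℝ) - 2 * (k : ℝ)) * P (k - i) * Q i)) = 0 := by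
  have h1 : ∑ i ∈ Icc 1 k, (4 * (i : ℝ) - 2 * (k : ℝ) - 2) * Q (k + 1 - i) * P i
      = ∑ i ∈ Icc 1 k, (-((4 * (i : ℝ) - 2 * (k : ℝ) - 2) * P (k + 1 - i) * Q i)) := by
    refine Finset.sum_nbij' (fun x => k + 1 - x) (fun x => k + 1 - x) ?_ ?_ ?_ ?_ ?_ <;>
        intro x hx
    · simp only [Finset.mem_Icc] at hx ⊢; omega
    · simp only [Finset.mem_Icc] at hx ⊢; omega
    · omega
    · omega
    · rw [show k + 1 - (k + 1 - x) = x by ring]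
      push_cast
      ring
  have h2 : ∑ i ∈ Icc 1 k, (4 * (i : ℝ) - 2 * (k : ℝ)) * Q (k - i) * P i
      = ∑ i ∈ Icc 1 k, (-((4 * (i : ℝ) - 2 * (k : ℝ)) * P (k - i) * Q i)) := by
    have split1 : ∑ i ∈ Icc 1 k, (4 * (i : ℝ) - 2 * (k : ℝ)) * Q (k - i) * P i
        = ∑ i ∈ Icc 1 (k - 1), (4 * (i : ℝ) - 2 * (k : ℝ)) * Q (k - i) * P i := by
      rw [sum_split (fun i => (4 * (i : ℝ) - 2 * (k : ℝ)) * Q (k - i) * P i)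
        (show (1:ℤ) ≤ (k - 1) + 1 by omega) (show k - 1 ≤ k by omega),
        show k - 1 + 1 = k by ring, show Icc k k = {k} from Finset.Icc_self _,
        Finset.sum_singleton, show k - k = (0:ℤ) by ring, hQ0]
      ring
    have split2 : ∑ i ∈ Icc 1 k, (-((4 * (i : ℝ) - 2 * (k : ℝ)) * P (k - i) * Q i))
        = ∑ i ∈ Icc 1 (k - 1), (-((4 * (i : ℝ) - 2 * (k : ℝ)) * P (k - i) * Q i)) := by
      rw [sum_split (fun i => -((4 * (i : ℝ) - 2 * (k : ℝ)) * P (k - i) * Q i))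
        (show (1:ℤ) ≤ (k - 1) + 1 by omega) (show k - 1 ≤ k by omega),
        show k - 1 + 1 = k by ring, show Icc k k = {k} from Finset.Icc_self _,
        Finset.sum_singleton, show k - k = (0:ℤ) by ring, hP0]
      ring
    rw [split1, split2]
    refine Finset.sum_nbij' (fun x => k - x) (fun x => k - x) ?_ ?_ ?_ ?_ ?_ <;>
        intro x hx
    · simp only [Finset.mem_Icc] at hx ⊢; omega
    · simp only [Finset.mem_Icc] at hx ⊢; omega
    · omega
    · omega
    · rw [show k - (k - x) = x by ring]
      push_cast
      ring
  rw [Finset.sum_sub_distrib, Finset.sum_sub_distrib, h1, h2, Finset.sum_neg_distrib,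
    Finset.sum_neg_distrib]
  ring

/-! ### The PCD part -/

lemma pcd_bound (k : ℤ) (hk : 1 ≤ k) (b : ℤ → ℝ)
    (hmono : ∀ i j : ℤ, -k ≤ i → i ≤ j → j ≤ k → b i ≤ b j)
    (hrange : ∀ i : ℤ, -k ≤ i → i ≤ k → b i ∈ Set.Icc (-(1 / 2) : ℝ) (1 / 2))
    (hb0 : b 0 = 0) :
    (∑ i ∈ Icc 1 k, (|b (i - k - 1)| - |b (i - k)|) * ∑ j ∈ Icc (-k) k, dc (b i) (b j))
      + (1 - |b k| - |b (-k)|) * (∑ j ∈ Icc (-k) k, dc (b 0) (b j))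
      + (∑ i ∈ Icc (-k) (-1),
          (|b (i + k + 1)| - |b (i + k)|) * ∑ j ∈ Icc (-k) k, dc (b i) (b j))
    ≤ (∑ j ∈ Icc (-k) k, |b j|)
      + (∑ j ∈ Icc 1 k,
          |b j| * (2 * (k : ℝ) + 1 - 2 * (j : ℝ)) * (|b (j - k - 1)| - |b (j - k)|))
      + (∑ j ∈ Icc (-k) (-1),
          |b j| * (2 * (k : ℝ) + 1 + 2 * (j : ℝ)) * (|b (j + k + 1)| - |b (j + k)|)) := by
  obtain ⟨P, hPd⟩ : ∃ P : ℤ → ℝ, P = fun i => |b i| := ⟨_, rfl⟩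
  obtain ⟨Q, hQd⟩ : ∃ Q : ℤ → ℝ, Q = fun i => |b (-i)| := ⟨_, rfl⟩
  obtain ⟨S, hSd⟩ : ∃ S : ℝ, S = ∑ j ∈ Icc (-k) k, |b j| := ⟨_, rfl⟩
  have hPi : ∀ i : ℤ, |b i| = P i := fun i => by rw [hPd]
  have hQi : ∀ i : ℤ, |b (-i)| = Q i := fun i => by rw [hQd]
  have hP0 : P 0 = 0 := by rw [← hPi 0, hb0, abs_zero]
  have hQ0 : Q 0 = 0 := by
    rw [← hQi 0, show -(0:ℤ) = 0 from neg_zero, hb0, abs_zero]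
  have hnn : ∀ j : ℤ, 0 ≤ j → j ≤ k → 0 ≤ b j := by
    intro j h1 h2
    rw [← hb0]
    exact hmono 0 j (by omega) h1 h2
  have hnp : ∀ j : ℤ, -k ≤ j → j ≤ 0 → b j ≤ 0 := by
    intro j h1 h2
    rw [← hb0]
    exact hmono j 0 h1 h2 (by omega)
  -- the reflected profile
  obtain ⟨c, hcd⟩ : ∃ c : ℤ → ℝ, c = fun i => -(b (-i)) := ⟨_, rfl⟩
  have hci : ∀ i : ℤ, c i = -(b (-i)) := fun i => by rw [hcd]
  have hmono' : ∀ i j : ℤ, -k ≤ i → i ≤ j → j ≤ k → c i ≤ c j := by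
    intro i j h1 h2 h3
    rw [hci, hci, neg_le_neg_iff]
    exact hmono (-j) (-i) (by omega) (by omega) (by omega)
  have hc0 : c 0 = 0 := by rw [hci, show -(0:ℤ) = 0 from neg_zero, hb0, neg_zero]
  have habsc : ∀ j : ℤ, |c j| = Q j := fun j => by rw [hci, abs_neg, hQi]
  have hSc : ∑ j ∈ Icc (-k) k, |c j| = S := by
    rw [Finset.sum_congr rfl fun j _ => habsc j, hQd, hSd,
      sum_reflect 0 (-k) k (fun j => |b j|)]
    simp only [zero_sub, neg_neg]
  have hCc : ∀ m : ℤ, ∑ j ∈ Icc (-k) k, dc (c m) (c j)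
      = ∑ j ∈ Icc (-k) k, dc (b (-m)) (b j) := by
    intro m
    have e1 : ∀ j : ℤ, dc (c m) (c j) = dc (b (-m)) (b (-j)) := by
      intro j
      rw [hci, hci, dc_neg]
    rw [Finset.sum_congr rfl fun j _ => e1 j,
      sum_reflect 0 (-k) k (fun j => dc (b (-m)) (b j))]
    simp only [zero_sub, neg_neg]
  -- cost bounds
  have hcostP : ∀ i : ℤ, 1 ≤ i → i ≤ k →
      ∑ j ∈ Icc (-k) k, dc (b i) (b j)
        ≤ S + (2 * (i : ℝ) - 1) * P i - 2 * ∑ j ∈ Icc 1 (i - 1), P j := by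
    intro i h1 h2
    have h3 := cost_bound k hk b hmono hb0 h1 h2
    rw [← hSd] at h3
    simp only [hPi] at h3
    exact h3
  have hcostQ : ∀ m : ℤ, 1 ≤ m → m ≤ k →
      ∑ j ∈ Icc (-k) k, dc (b (-m)) (b j)
        ≤ S + (2 * (m : ℝ) - 1) * Q m - 2 * ∑ j ∈ Icc 1 (m - 1), Q j := by
    intro m h1 h2
    have h3 := cost_bound k hk c hmono' hc0 h1 h2
    rw [hCc m, hSc] at h3
    simp only [habsc] at h3
    exact h3
  have hC0 : ∑ j ∈ Icc (-k) k, dc (b 0) (b j) ≤ S := by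
    rw [hSd]
    refine Finset.sum_le_sum fun j hj => ?_
    rw [hb0]
    have h3 := dc_le_abs 0 (b j)
    rwa [zero_sub, abs_neg] at h3
  -- weight identification and nonnegativity
  have hwP : ∀ i : ℤ, |b (i - k - 1)| - |b (i - k)| = Q (k + 1 - i) - Q (k - i) := by
    intro i
    rw [show i - k - 1 = -(k + 1 - i) by ring, show i - k = -(k - i) by ring, hQi, hQi]
  have hwPnn : ∀ i : ℤ, 1 ≤ i → i ≤ k → 0 ≤ Q (k + 1 - i) - Q (k - i) := by
    intro i h1 h2
    rw [← hQi, ← hQi,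
      abs_of_nonpos (hnp (-(k + 1 - i)) (by omega) (by omega)),
      abs_of_nonpos (hnp (-(k - i)) (by omega) (by omega))]
    have h3 := hmono (-(k + 1 - i)) (-(k - i)) (by omega) (by omega) (by omega)
    linarith
  have hwQ : ∀ m : ℤ, |b (-m + k + 1)| - |b (-m + k)| = P (k + 1 - m) - P (k - m) := by
    intro m
    rw [show -m + k + 1 = k + 1 - m by ring, show -m + k = k - m by ring, hPi, hPi]
  have hwQnn : ∀ m : ℤ, 1 ≤ m → m ≤ k → 0 ≤ P (k + 1 - m) - P (k - m) := by
    intro m h1 h2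
    rw [← hPi, ← hPi,
      abs_of_nonneg (hnn (k + 1 - m) (by omega) (by omega)),
      abs_of_nonneg (hnn (k - m) (by omega) (by omega))]
    have h3 := hmono (k - m) (k + 1 - m) (by omega) (by omega) (by omega)
    linarith
  -- positive side chain
  have hPos : ∑ i ∈ Icc 1 k, (|b (i - k - 1)| - |b (i - k)|)
        * ∑ j ∈ Icc (-k) k, dc (b i) (b j)
      ≤ ∑ i ∈ Icc 1 k, (Q (k + 1 - i) - Q (k - i))
          * (S + ((2 * (i : ℝ) - 1) * P i - 2 * ∑ j ∈ Icc 1 (i - 1), P j)) := by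
    refine Finset.sum_le_sum fun i hi => ?_
    simp only [Finset.mem_Icc] at hi
    rw [hwP i]
    refine mul_le_mul_of_nonneg_left ?_ (hwPnn i hi.1 hi.2)
    have h3 := hcostP i hi.1 hi.2
    linarith
  -- negative side reindexing
  have hNeg0 : ∑ i ∈ Icc (-k) (-1),
        (|b (i + k + 1)| - |b (i + k)|) * ∑ j ∈ Icc (-k) k, dc (b i) (b j)
      = ∑ m ∈ Icc 1 k, (|b (-m + k + 1)| - |b (-m + k)|)
          * ∑ j ∈ Icc (-k) k, dc (b (-m)) (b j) := by
    rw [sum_reflect 0 (-k) (-1) (fun i =>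
      (|b (i + k + 1)| - |b (i + k)|) * ∑ j ∈ Icc (-k) k, dc (b i) (b j))]
    simp only [zero_sub, neg_neg]
  have hNeg : ∑ m ∈ Icc 1 k, (|b (-m + k + 1)| - |b (-m + k)|)
        * ∑ j ∈ Icc (-k) k, dc (b (-m)) (b j)
      ≤ ∑ m ∈ Icc 1 k, (P (k + 1 - m) - P (k - m))
          * (S + ((2 * (m : ℝ) - 1) * Q m - 2 * ∑ j ∈ Icc 1 (m - 1), Q j)) := by
    refine Finset.sum_le_sum fun m hm => ?_
    simp only [Finset.mem_Icc] at hm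
    rw [hwQ m]
    refine mul_le_mul_of_nonneg_left ?_ (hwQnn m hm.1 hm.2)
    have h3 := hcostQ m hm.1 hm.2
    linarith
  -- telescoping the weights
  have hteleQ : ∑ i ∈ Icc 1 k, (Q (k + 1 - i) - Q (k - i)) = Q k := by
    have h4 : ∑ i ∈ Icc 1 k, (Q (k + 1 - i) - Q (k - i))
        = ∑ i ∈ Icc (0 + 1) k,
            ((fun t => Q (k - t)) (i - 1) - (fun t => Q (k - t)) i) := by
      refine Finset.sum_congr (by norm_num) fun i _ => ?_
      simp only
      rw [show k + 1 - i = k - (i - 1) by ring]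
    rw [h4, sum_tele (fun t => Q (k - t)) (show (0:ℤ) ≤ k by omega)]
    simp only [sub_zero, sub_self, hQ0]
  have hteleP : ∑ i ∈ Icc 1 k, (P (k + 1 - i) - P (k - i)) = P k := by
    have h4 : ∑ i ∈ Icc 1 k, (P (k + 1 - i) - P (k - i))
        = ∑ i ∈ Icc (0 + 1) k,
            ((fun t => P (k - t)) (i - 1) - (fun t => P (k - t)) i) := by
      refine Finset.sum_congr (by norm_num) fun i _ => ?_
      simp only
      rw [show k + 1 - i = k - (i - 1) by ring]
    rw [h4, sum_tele (fun t => P (k - t)) (show (0:ℤ) ≤ k by omega)]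
    simp only [sub_zero, sub_self, hP0]
  -- expand the right-hand sides of the chains
  have hExpP : ∑ i ∈ Icc 1 k, (Q (k + 1 - i) - Q (k - i))
        * (S + ((2 * (i : ℝ) - 1) * P i - 2 * ∑ j ∈ Icc 1 (i - 1), P j))
      = Q k * S
        + ((∑ i ∈ Icc 1 k,
            P i * (2 * (k : ℝ) + 1 - 2 * (i : ℝ)) * (Q (k + 1 - i) - Q (k - i)))
          + ∑ i ∈ Icc 1 k, ((4 * (i : ℝ) - 2 * (k : ℝ) - 2) * Q (k + 1 - i) * P i
              - (4 * (i : ℝ) - 2 * (k : ℝ)) * Q (k - i) * P i)) := by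
    have e1 : ∑ i ∈ Icc 1 k, (Q (k + 1 - i) - Q (k - i))
          * (S + ((2 * (i : ℝ) - 1) * P i - 2 * ∑ j ∈ Icc 1 (i - 1), P j))
        = (∑ i ∈ Icc 1 k, (Q (k + 1 - i) - Q (k - i))) * S
          + ∑ i ∈ Icc 1 k, (Q (k + 1 - i) - Q (k - i))
              * ((2 * (i : ℝ) - 1) * P i - 2 * ∑ j ∈ Icc 1 (i - 1), P j) := by
      rw [Finset.sum_mul, ← Finset.sum_add_distrib]
      refine Finset.sum_congr rfl fun i _ => ?_
      ring
    rw [e1, hteleQ, side_alg k hk P Q hQ0]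
  have hExpQ : ∑ m ∈ Icc 1 k, (P (k + 1 - m) - P (k - m))
        * (S + ((2 * (m : ℝ) - 1) * Q m - 2 * ∑ j ∈ Icc 1 (m - 1), Q j))
      = P k * S
        + ((∑ m ∈ Icc 1 k,
            Q m * (2 * (k : ℝ) + 1 - 2 * (m : ℝ)) * (P (k + 1 - m) - P (k - m)))
          + ∑ m ∈ Icc 1 k, ((4 * (m : ℝ) - 2 * (k : ℝ) - 2) * P (k + 1 - m) * Q m
              - (4 * (m : ℝ) - 2 * (k : ℝ)) * P (k - m) * Q m)) := by
    have e1 : ∑ m ∈ Icc 1 k, (P (k + 1 - m) - P (k - m))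
          * (S + ((2 * (m : ℝ) - 1) * Q m - 2 * ∑ j ∈ Icc 1 (m - 1), Q j))
        = (∑ m ∈ Icc 1 k, (P (k + 1 - m) - P (k - m))) * S
          + ∑ m ∈ Icc 1 k, (P (k + 1 - m) - P (k - m))
              * ((2 * (m : ℝ) - 1) * Q m - 2 * ∑ j ∈ Icc 1 (m - 1), Q j) := by
      rw [Finset.sum_mul, ← Finset.sum_add_distrib]
      refine Finset.sum_congr rfl fun i _ => ?_
      ring
    rw [e1, hteleP, side_alg k hk Q P hP0]
  -- middle term
  have hMid : (1 - |b k| - |b (-k)|) * (∑ j ∈ Icc (-k) k, dc (b 0) (b j))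
      ≤ (1 - |b k| - |b (-k)|) * S := by
    refine mul_le_mul_of_nonneg_left hC0 ?_
    have h5 := hrange k (by omega) (le_refl k)
    have h6 := hrange (-k) (le_refl (-k)) (by omega)
    simp only [Set.mem_Icc] at h5 h6
    have h7 : |b k| ≤ 1 / 2 := abs_le.mpr ⟨by linarith [h5.1], h5.2⟩
    have h8 : |b (-k)| ≤ 1 / 2 := abs_le.mpr ⟨by linarith [h6.1], h6.2⟩
    linarith
  -- identify the cross sums in the goal
  have hCrossP : ∑ j ∈ Icc 1 k,
        |b j| * (2 * (k : ℝ) + 1 - 2 * (j : ℝ)) * (|b (j - k - 1)| - |b (j - k)|)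
      = ∑ i ∈ Icc 1 k,
          P i * (2 * (k : ℝ) + 1 - 2 * (i : ℝ)) * (Q (k + 1 - i) - Q (k - i)) := by
    refine Finset.sum_congr rfl fun j _ => ?_
    rw [hwP j, hPi]
  have hCrossQ : ∑ j ∈ Icc (-k) (-1),
        |b j| * (2 * (k : ℝ) + 1 + 2 * (j : ℝ)) * (|b (j + k + 1)| - |b (j + k)|)
      = ∑ m ∈ Icc 1 k,
          Q m * (2 * (k : ℝ) + 1 - 2 * (m : ℝ)) * (P (k + 1 - m) - P (k - m)) := by
    rw [sum_reflect 0 (-k) (-1) (fun j =>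
      |b j| * (2 * (k : ℝ) + 1 + 2 * (j : ℝ)) * (|b (j + k + 1)| - |b (j + k)|))]
    simp only [zero_sub, neg_neg]
    refine Finset.sum_congr rfl fun m _ => ?_
    rw [hwQ m, hQi]
    push_cast
    ring
  -- final assembly
  have hrem := rem_cancel k hk P Q hP0 hQ0
  have hPk : P k = |b k| := (hPi k).symm
  have hQk : Q k = |b (-k)| := (hQi k).symm
  have hfin : Q k * S + ((1 - |b k| - |b (-k)|) * S + P k * S) = S := by
    rw [hPk, hQk]
    ring
  rw [hNeg0, hCrossP, hCrossQ, ← hSd]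
  linarith [hPos, hNeg, hMid, hExpP, hExpQ]

/-! ### The RD part -/

lemma rd_bound (k : ℤ) (hk : 1 ≤ k) (b : ℤ → ℝ)
    (hmono : ∀ i j : ℤ, -k ≤ i → i ≤ j → j ≤ k → b i ≤ b j) (hb0 : b 0 = 0) :
    ∑ i ∈ Icc (-k) k, ∑ j ∈ Icc (-k) k, dc (b i) (b j)
      ≤ ∑ i ∈ Icc (-k) k, 4 * |(i : ℝ)| * |b i| := by
  have hper : ∀ i ∈ Icc (-k) k, ∑ j ∈ Icc (-k) k, dc (b i) (b j)
      ≤ ((i : ℝ) + (k : ℝ) + 1) * b i - (∑ j ∈ Icc (-k) i, b j)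
        + ((∑ j ∈ Icc (i + 1) k, b j) - ((k : ℝ) - (i : ℝ)) * b i) := by
    intro i hi
    simp only [Finset.mem_Icc] at hi
    rw [sum_split (fun j => dc (b i) (b j)) (show -k ≤ i + 1 by omega) hi.2]
    have l1 : ∑ j ∈ Icc (-k) i, dc (b i) (b j)
        ≤ ((i : ℝ) + (k : ℝ) + 1) * b i - ∑ j ∈ Icc (-k) i, b j := by
      have h1 : ∑ j ∈ Icc (-k) i, dc (b i) (b j)
          ≤ ∑ j ∈ Icc (-k) i, (b i - b j) := by
        refine Finset.sum_le_sum fun j hj => ?_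
        simp only [Finset.mem_Icc] at hj
        have h2 : b j ≤ b i := hmono j i hj.1 hj.2 hi.2
        have h3 := dc_le_abs (b i) (b j)
        rw [abs_of_nonneg (by linarith : (0:ℝ) ≤ b i - b j)] at h3
        linarith
      rw [Finset.sum_sub_distrib, sum_const_Icc (-k) i (by omega) (b i)] at h1
      push_cast at h1 ⊢
      linarith
    have l2 : ∑ j ∈ Icc (i + 1) k, dc (b i) (b j)
        ≤ (∑ j ∈ Icc (i + 1) k, b j) - ((k : ℝ) - (i : ℝ)) * b i := by
      have h1 : ∑ j ∈ Icc (i + 1) k, dc (b i) (b j)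
          ≤ ∑ j ∈ Icc (i + 1) k, (b j - b i) := by
        refine Finset.sum_le_sum fun j hj => ?_
        simp only [Finset.mem_Icc] at hj
        have h2 : b i ≤ b j := hmono i j hi.1 (by omega) hj.2
        have h3 := dc_le_abs (b i) (b j)
        rw [abs_of_nonpos (by linarith : b i - b j ≤ 0)] at h3
        linarith
      rw [Finset.sum_sub_distrib, sum_const_Icc (i + 1) k (by omega) (b i)] at h1
      push_cast at h1 ⊢
      linarith
    linarith
  have step1 : ∑ i ∈ Icc (-k) k, ∑ j ∈ Icc (-k) k, dc (b i) (b j)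
      ≤ ∑ i ∈ Icc (-k) k, (((i : ℝ) + (k : ℝ) + 1) * b i - (∑ j ∈ Icc (-k) i, b j)
          + ((∑ j ∈ Icc (i + 1) k, b j) - ((k : ℝ) - (i : ℝ)) * b i)) :=
    Finset.sum_le_sum hper
  -- evaluate the double sums
  have hA : ∑ i ∈ Icc (-k) k, ∑ j ∈ Icc (-k) i, b j
      = (∑ i ∈ Icc (-k) k, ((k : ℝ) - (i : ℝ)) * b i) + ∑ i ∈ Icc (-k) k, b i := by
    have e1 : ∀ i ∈ Icc (-k) k, ∑ j ∈ Icc (-k) i, b j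
        = (∑ j ∈ Icc (-k) (i - 1), b j) + b i := by
      intro i hi
      simp only [Finset.mem_Icc] at hi
      rw [sum_split b (show -k ≤ (i - 1) + 1 by omega) (show i - 1 ≤ i by omega),
        show i - 1 + 1 = i by ring, show Icc i i = {i} from Finset.Icc_self _,
        Finset.sum_singleton]
    rw [Finset.sum_congr rfl e1, Finset.sum_add_distrib]
    congr 1
    have e2 := sum_triangle (-k) k (fun x y => b x)
    rw [← e2]
    refine Finset.sum_congr rfl fun x hx => ?_
    simp only [Finset.mem_Icc] at hx
    rw [sum_const_Icc (x + 1) k (by omega) (b x)]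
    push_cast
    ring
  have hB : ∑ i ∈ Icc (-k) k, ∑ j ∈ Icc (i + 1) k, b j
      = ∑ j ∈ Icc (-k) k, ((j : ℝ) + (k : ℝ)) * b j := by
    have e2 := sum_triangle (-k) k (fun x y => b y)
    rw [e2]
    refine Finset.sum_congr rfl fun x hx => ?_
    simp only [Finset.mem_Icc] at hx
    rw [sum_const_Icc (-k) (x - 1) (by omega) (b x)]
    push_cast
    ring
  have step2 : ∑ i ∈ Icc (-k) k, (((i : ℝ) + (k : ℝ) + 1) * b i
        - (∑ j ∈ Icc (-k) i, b j)
        + ((∑ j ∈ Icc (i + 1) k, b j) - ((k : ℝ) - (i : ℝ)) * b i))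
      = ∑ i ∈ Icc (-k) k, 4 * (i : ℝ) * b i := by
    rw [Finset.sum_add_distrib, Finset.sum_sub_distrib, Finset.sum_sub_distrib, hA, hB]
    have e3 : ∑ i ∈ Icc (-k) k, 4 * (i : ℝ) * b i
        = ∑ i ∈ Icc (-k) k, (((i : ℝ) + (k : ℝ) + 1) * b i
            - (((k : ℝ) - (i : ℝ)) * b i + b i)
            + (((i : ℝ) + (k : ℝ)) * b i - ((k : ℝ) - (i : ℝ)) * b i)) := by
      refine Finset.sum_congr rfl fun i _ => ?_
      ring
    rw [e3, Finset.sum_add_distrib, Finset.sum_sub_distrib, Finset.sum_sub_distrib,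
      Finset.sum_add_distrib]
  have step3 : ∑ i ∈ Icc (-k) k, 4 * (i : ℝ) * b i
      = ∑ i ∈ Icc (-k) k, 4 * |(i : ℝ)| * |b i| := by
    refine Finset.sum_congr rfl fun i hi => ?_
    simp only [Finset.mem_Icc] at hi
    rcases le_or_gt 0 i with h | h
    · have h1 : 0 ≤ b i := by
        rw [← hb0]; exact hmono 0 i (by omega) h (by omega)
      rw [abs_of_nonneg h1, abs_of_nonneg (by exact_mod_cast h : (0:ℝ) ≤ (i:ℝ))]
    · have h1 : b i ≤ 0 := by
        rw [← hb0]; exact hmono i 0 hi.1 (by omega) (by omega)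
      rw [abs_of_nonpos h1, abs_of_nonpos (by exact_mod_cast h.le : (i:ℝ) ≤ 0)]
      ring
  rw [← step3, ← step2]
  exact step1

/-! ### Main theorem -/

/-- If `0` minimizes the cyclic social cost of an admissible profile `b`, then the sum of
the cyclic social costs of the Random Dictator lottery and the Proportional Circle Distance
lottery is at most `φ(b)` times twice the optimal cost; hence the approximation ratio of the
mixed mechanism `RD+PCD` at `b` is at most `φ(b)`. -/
theorem rd_pcd_le_phi (k : ℤ) (hk : 1 ≤ k) (b : ℤ → ℝ) (hb : IsAdmissible k b)
    (hopt : ∀ v ∈ Set.Icc (-(1 / 2) : ℝ) (1 / 2),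
      ∑ j ∈ Finset.Icc (-k) k, dc (b j) 0 ≤ ∑ j ∈ Finset.Icc (-k) k, dc (b j) v) :
    (1 / (2 * (k : ℝ) + 1)) *
        (∑ i ∈ Finset.Icc (-k) k, ∑ j ∈ Finset.Icc (-k) k, dc (b i) (b j)) +
      ((∑ i ∈ Finset.Icc 1 k,
          (|b (i - k - 1)| - |b (i - k)|) * ∑ j ∈ Finset.Icc (-k) k, dc (b i) (b j)) +
        (1 - |b k| - |b (-k)|) * (∑ j ∈ Finset.Icc (-k) k, dc (b 0) (b j)) +
        ∑ i ∈ Finset.Icc (-k) (-1),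
          (|b (i + k + 1)| - |b (i + k)|) * ∑ j ∈ Finset.Icc (-k) k, dc (b i) (b j)) ≤
      phi k b * (2 * ∑ j ∈ Finset.Icc (-k) k, dc (b j) 0) := by
  obtain ⟨⟨hmono, hrange, hb0⟩, i₀, hi₀1, hi₀2, hi₀3⟩ := hb
  have hk' : (1 : ℝ) ≤ (k : ℝ) := by exact_mod_cast hk
  have habs_half : ∀ j ∈ Icc (-k) k, |b j| ≤ 1 / 2 := by
    intro j hj
    simp only [Finset.mem_Icc] at hj
    have h1 := hrange j hj.1 hj.2
    simp only [Set.mem_Icc] at h1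
    exact abs_le.mpr ⟨by linarith [h1.1], h1.2⟩
  have hS0 : ∑ j ∈ Icc (-k) k, dc (b j) 0 = ∑ j ∈ Icc (-k) k, |b j| :=
    Finset.sum_congr rfl fun j hj => dc_zero_left (b j) (habs_half j hj)
  have hSpos : 0 < ∑ j ∈ Icc (-k) k, |b j| := by
    have h1 : |b i₀| ≤ ∑ j ∈ Icc (-k) k, |b j| :=
      Finset.single_le_sum (fun j _ => abs_nonneg (b j))
        (Finset.mem_Icc.mpr ⟨hi₀1, hi₀2⟩)
    have h2 : 0 < |b i₀| := abs_pos.mpr hi₀3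
    linarith
  have hRHS : phi k b * (2 * ∑ j ∈ Icc (-k) k, dc (b j) 0) = Phi k b := by
    rw [hS0]
    unfold phi Dd
    rw [div_mul_cancel₀]
    intro h
    nlinarith [hSpos]
  rw [hRHS]
  have hT1 : (1 / (2 * (k : ℝ) + 1)) *
        (∑ i ∈ Icc (-k) k, ∑ j ∈ Icc (-k) k, dc (b i) (b j))
      ≤ ∑ i ∈ Icc (-k) k, (4 * |(i : ℝ)| / (2 * (k : ℝ) + 1)) * |b i| := by
    have h1 := rd_bound k hk b hmono hb0
    have h2 : ∑ i ∈ Icc (-k) k, (4 * |(i : ℝ)| / (2 * (k : ℝ) + 1)) * |b i|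
        = (1 / (2 * (k : ℝ) + 1)) * ∑ i ∈ Icc (-k) k, 4 * |(i : ℝ)| * |b i| := by
      rw [Finset.mul_sum]
      refine Finset.sum_congr rfl fun i _ => ?_
      field_simp
    rw [h2]
    refine mul_le_mul_of_nonneg_left h1 ?_
    positivity
  have hT2 := pcd_bound k hk b hmono hrange hb0
  unfold Phi
  linarith

end
end

section
/- Let b be a normalized line profile and let i be an integer with 1 ≤ i ≤ k. Then Σⱼ (|b j − b i| − |b j − b (i−1)|) = (2i−1) · (|b i| − |b (i−1)|). (That is, the difference of the social costs after the cut of the reports of agents i and i−1 equals (2i−1) times the difference of the absolute values of their reports.) -/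
open Finset

noncomputable section

/-- Difference of the social costs after the cut of the reports of agents `i` and `i-1`,
for `1 ≤ i ≤ k`. -/
theorem sc_diff_succ (k : ℤ) (hk : 1 ≤ k) (b : ℤ → ℝ) (hb : IsNormalized k b)
    (i : ℤ) (hi1 : 1 ≤ i) (hik : i ≤ k) :
    ∑ j ∈ Finset.Icc (-k) k, (|b j - b i| - |b j - b (i - 1)|) =
      (2 * (i : ℝ) - 1) * (|b i| - |b (i - 1)|) := by
  obtain ⟨hmono, hbd, h0⟩ := hb
  have hb1 : 0 ≤ b (i - 1) := by
    have := hmono 0 (i - 1) (by linarith) (by linarith) (by linarith)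
    linarith [h0 ▸ this]
  have hbi : b (i - 1) ≤ b i := hmono (i - 1) i (by linarith) (by linarith) hik
  have habs1 : |b (i - 1)| = b (i - 1) := abs_of_nonneg hb1
  have habs2 : |b i| = b i := abs_of_nonneg (le_trans hb1 hbi)
  have hsplit : Finset.Ico (-k) i ∪ Finset.Icc i k = Finset.Icc (-k) k := by
    ext a
    simp only [Finset.mem_union, Finset.mem_Ico, Finset.mem_Icc]
    omega
  have hdisj : Disjoint (Finset.Ico (-k) i) (Finset.Icc i k) := by
    rw [Finset.disjoint_left]
    intro a ha ha'
    simp only [Finset.mem_Ico, Finset.mem_Icc] at ha ha'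
    omega
  rw [← hsplit, Finset.sum_union hdisj]
  have e1 : ∀ j ∈ Finset.Ico (-k) i, (|b j - b i| - |b j - b (i - 1)|)
      = b i - b (i - 1) := by
    intro j hj
    simp only [Finset.mem_Ico] at hj
    have hj1 : b j ≤ b (i - 1) := hmono j (i - 1) hj.1 (by omega) (by omega)
    rw [abs_of_nonpos (by linarith), abs_of_nonpos (by linarith)]
    ring
  have e2 : ∀ j ∈ Finset.Icc i k, (|b j - b i| - |b j - b (i - 1)|)
      = b (i - 1) - b i := by
    intro j hj
    simp only [Finset.mem_Icc] at hj
    have hj1 : b i ≤ b j := hmono i j (by linarith) hj.1 hj.2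
    rw [abs_of_nonneg (by linarith), abs_of_nonneg (by linarith)]
    ring
  rw [Finset.sum_congr rfl e1, Finset.sum_congr rfl e2, Finset.sum_const,
    Finset.sum_const, Int.card_Ico, Int.card_Icc, nsmul_eq_mul, nsmul_eq_mul,
    habs1, habs2]
  have t1 : ((i - -k).toNat : ℝ) = (i : ℝ) + (k : ℝ) := by
    have h : ((i - -k).toNat : ℤ) = i - -k := Int.toNat_of_nonneg (by omega)
    have h2 : ((i - -k).toNat : ℝ) = ((i - -k : ℤ) : ℝ) := by exact_mod_cast congrArg (Int.cast : ℤ → ℝ) h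
    rw [h2]; push_cast; ring
  have t2 : ((k + 1 - i).toNat : ℝ) = (k : ℝ) + 1 - (i : ℝ) := by
    have h : ((k + 1 - i).toNat : ℤ) = k + 1 - i := Int.toNat_of_nonneg (by omega)
    have h2 : ((k + 1 - i).toNat : ℝ) = ((k + 1 - i : ℤ) : ℝ) := by exact_mod_cast congrArg (Int.cast : ℤ → ℝ) h
    rw [h2]; push_cast; ring
  rw [t1, t2]
  ring
end
end

section
/- Let b be a normalized line profile and let i be an integer with 1 ≤ i ≤ k. Then Σⱼ |b j − b i| − Σⱼ |b j| = (2i−1) · |b i| − 2 · Σ_{j=1}^{i−1} |b j|. (That is, the difference of the social costs after the cut of the reports of agents i and 0 has this closed form.) -/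
open Finset

noncomputable section

/-- Difference of the social costs after the cut of the reports of agents `i` and `0`,
for `1 ≤ i ≤ k`. -/
theorem sc_diff_zero (k : ℤ) (hk : 1 ≤ k) (b : ℤ → ℝ) (hb : IsNormalized k b)
    (i : ℤ) (hi1 : 1 ≤ i) (hik : i ≤ k) :
    (∑ j ∈ Finset.Icc (-k) k, |b j - b i|) - (∑ j ∈ Finset.Icc (-k) k, |b j|) =
      (2 * (i : ℝ) - 1) * |b i| - 2 * ∑ j ∈ Finset.Icc 1 (i - 1), |b j| := by
  obtain ⟨hmono, hrange, h0⟩ := hb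
  have hbi : 0 ≤ b i := by
    have := hmono 0 i (by linarith) (by linarith) hik
    linarith [h0]
  have e1 : Finset.Icc (-k) k =
      Finset.Icc (-k) 0 ∪ (Finset.Icc 1 (i - 1) ∪ Finset.Icc i k) := by
    ext x; simp only [Finset.mem_Icc, Finset.mem_union]; omega
  have d1 : Disjoint (Finset.Icc (-k) 0) (Finset.Icc 1 (i - 1) ∪ Finset.Icc i k) := by
    simp only [Finset.disjoint_left, Finset.mem_Icc, Finset.mem_union]; omega
  have d2 : Disjoint (Finset.Icc 1 (i - 1)) (Finset.Icc i k) := by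
    simp only [Finset.disjoint_left, Finset.mem_Icc]; omega
  rw [← Finset.sum_sub_distrib, e1, Finset.sum_union d1, Finset.sum_union d2]
  have s1 : ∑ j ∈ Finset.Icc (-k) 0, (|b j - b i| - |b j|) = ((k : ℝ) + 1) * b i := by
    rw [Finset.sum_congr rfl (fun j hj => ?_), Finset.sum_const, Int.card_Icc]
    · have h : ((0 + 1 - (-k)).toNat : ℤ) = k + 1 := by omega
      have : ((0 + 1 - (-k)).toNat : ℝ) = (k : ℝ) + 1 := by exact_mod_cast h
      rw [nsmul_eq_mul, this]
    · simp only [Finset.mem_Icc] at hj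
      have hbj : b j ≤ 0 := by
        have := hmono j 0 hj.1 hj.2 (by linarith); linarith [h0]
      rw [abs_of_nonpos hbj, abs_of_nonpos (by linarith : b j - b i ≤ 0)]; ring
  have s2 : ∑ j ∈ Finset.Icc 1 (i - 1), (|b j - b i| - |b j|) =
      ((i : ℝ) - 1) * b i - 2 * ∑ j ∈ Finset.Icc 1 (i - 1), b j := by
    rw [Finset.sum_congr rfl (fun j hj => ?_) (g := fun j => b i - 2 * b j),
      Finset.sum_sub_distrib, Finset.sum_const, Int.card_Icc, ← Finset.mul_sum]
    · have h : ((i - 1 + 1 - 1).toNat : ℤ) = i - 1 := by omega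
      have : ((i - 1 + 1 - 1).toNat : ℝ) = (i : ℝ) - 1 := by exact_mod_cast h
      rw [nsmul_eq_mul, this]
    · simp only [Finset.mem_Icc] at hj
      have h1 : 0 ≤ b j := by
        have := hmono 0 j (by linarith) (by omega) (by omega); linarith [h0]
      have h2 : b j ≤ b i := hmono j i (by omega) (by omega) hik
      rw [abs_of_nonneg h1, abs_of_nonpos (by linarith : b j - b i ≤ 0)]; ring
  have s3 : ∑ j ∈ Finset.Icc i k, (|b j - b i| - |b j|) = ((k : ℝ) - i + 1) * (-b i) := by
    rw [Finset.sum_congr rfl (fun j hj => ?_), Finset.sum_const, Int.card_Icc]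
    · have h : ((k + 1 - i).toNat : ℤ) = k + 1 - i := by omega
      have : ((k + 1 - i).toNat : ℝ) = (k : ℝ) - i + 1 := by
        have := congrArg (fun z : ℤ => (z : ℝ)) h
        push_cast at this; linarith
      rw [nsmul_eq_mul, this]
    · simp only [Finset.mem_Icc] at hj
      have h2 : b i ≤ b j := hmono i j (by omega) hj.1 hj.2
      rw [abs_of_nonneg (show (0:ℝ) ≤ b j - b i by linarith),
        abs_of_nonneg (show (0:ℝ) ≤ b j by linarith)]
      ring
  have e2 : ∑ j ∈ Finset.Icc 1 (i - 1), |b j| = ∑ j ∈ Finset.Icc 1 (i - 1), b j := by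
    refine Finset.sum_congr rfl (fun j hj => ?_)
    simp only [Finset.mem_Icc] at hj
    have h1 : 0 ≤ b j := by
      have := hmono 0 j (by linarith) (by omega) (by omega); linarith [h0]
    exact abs_of_nonneg h1
  rw [s1, s2, s3, e2, abs_of_nonneg hbi]; ring

end
end

section
/- Let b be a normalized line profile and let i be an integer with −k ≤ i ≤ −1. Then Σⱼ (|b j − b i| − |b j − b (i+1)|) = (−2i−1) · (|b i| − |b (i+1)|). -/
open Finset

noncomputable section

/-- Difference of the social costs after the cut of the reports of agents `i` and `i+1`,
for `-k ≤ i ≤ -1`. -/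
theorem sc_diff_pred (k : ℤ) (hk : 1 ≤ k) (b : ℤ → ℝ) (hb : IsNormalized k b)
    (i : ℤ) (hik : -k ≤ i) (hi1 : i ≤ -1) :
    ∑ j ∈ Finset.Icc (-k) k, (|b j - b i| - |b j - b (i + 1)|) =
      (-2 * (i : ℝ) - 1) * (|b i| - |b (i + 1)|) := by
  obtain ⟨hmono, hrange, h0⟩ := hb
  have hbi0 : b i ≤ 0 := by
    have := hmono i 0 hik (by linarith) (by linarith); linarith [h0 ▸ this]
  have hbi10 : b (i+1) ≤ 0 := by
    have := hmono (i+1) 0 (by linarith) (by linarith) (by linarith); linarith [h0 ▸ this]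
  have hii : b i ≤ b (i+1) := hmono i (i+1) hik (by linarith) (by linarith)
  have hdisj : Disjoint (Finset.Icc (-k) i) (Finset.Icc (i+1) k) := by
    simp only [Finset.disjoint_left, Finset.mem_Icc]
    intro a ha hb; omega
  have hs : Finset.Icc (-k) k = Finset.Icc (-k) i ∪ Finset.Icc (i+1) k := by
    ext j; simp only [Finset.mem_Icc, Finset.mem_union]; omega
  rw [hs, Finset.sum_union hdisj]
  have h1 : ∀ j ∈ Finset.Icc (-k) i, |b j - b i| - |b j - b (i+1)| = b i - b (i+1) := by
    intro j hj; rw [Finset.mem_Icc] at hj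
    have hj1 : b j ≤ b i := hmono j i hj.1 hj.2 (by linarith)
    rw [abs_of_nonpos (by linarith), abs_of_nonpos (by linarith)]; ring
  have h2 : ∀ j ∈ Finset.Icc (i+1) k, |b j - b i| - |b j - b (i+1)| = b (i+1) - b i := by
    intro j hj; rw [Finset.mem_Icc] at hj
    have hj1 : b (i+1) ≤ b j := hmono (i+1) j (by linarith) hj.1 hj.2
    rw [abs_of_nonneg (by linarith), abs_of_nonneg (by linarith)]; ring
  rw [Finset.sum_congr rfl h1, Finset.sum_congr rfl h2, Finset.sum_const, Finset.sum_const,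
    Int.card_Icc, Int.card_Icc]
  have e1 : ((i + 1 - -k).toNat : ℝ) = (i : ℝ) + 1 + k := by
    have : ((i + 1 - -k).toNat : ℤ) = i + 1 + k := by omega
    exact_mod_cast congrArg (Int.cast : ℤ → ℝ) this
  have e2 : ((k + 1 - (i+1)).toNat : ℝ) = (k : ℝ) - i := by
    have : ((k + 1 - (i+1)).toNat : ℤ) = k - i := by omega
    exact_mod_cast congrArg (Int.cast : ℤ → ℝ) this
  rw [nsmul_eq_mul, nsmul_eq_mul, e1, e2, abs_of_nonpos hbi0, abs_of_nonpos hbi10]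
  ring


end
end

section
/- Let b be an admissible profile that is dominated, i.e., b i = 0 for at least k+1 indices i ∈ {−k,…,k}. Then φ(b) ≤ 3/2 − 1/(2k+1); equivalently Φ(b) ≤ (3/2 − 1/(2k+1)) · D(b). -/
open Finset

noncomputable section

/-- A profile is dominated if it equals zero for at least `k+1` agents in `{-k, …, k}`. -/
def IsDominated (k : ℤ) (b : ℤ → ℝ) : Prop :=
  ∃ S : Finset ℤ, S ⊆ Finset.Icc (-k) k ∧ k + 1 ≤ (S.card : ℤ) ∧ ∀ i ∈ S, b i = 0

/-- For a dominated admissible profile, `φ(b) ≤ 3/2 − 1/(2k+1)`;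
equivalently `Φ(b) ≤ (3/2 − 1/(2k+1)) · D(b)`. -/
theorem phi_le_of_dominated (k : ℤ) (hk : 1 ≤ k) (b : ℤ → ℝ)
    (hb : IsAdmissible k b) (hdom : IsDominated k b) :
    phi k b ≤ 3 / 2 - 1 / (2 * (k : ℝ) + 1) ∧
      Phi k b ≤ (3 / 2 - 1 / (2 * (k : ℝ) + 1)) * Dd k b := by
  obtain ⟨⟨hmono, hbnd, hb0⟩, i0, hi0l, hi0r, hi0⟩ := hb
  obtain ⟨S, hSsub, hScard, hSzero⟩ := hdom
  have hkR : (1 : ℝ) ≤ (k : ℝ) := by exact_mod_cast hk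
  have hk0 : (0 : ℝ) < 2 * (k : ℝ) + 1 := by linarith
  -- positive-side cross terms vanish
  have hcross1 : ∀ j ∈ Finset.Icc (1:ℤ) k,
      |b j| * (2 * (k : ℝ) + 1 - 2 * (j : ℝ)) * (|b (j - k - 1)| - |b (j - k)|) = 0 := by
    intro j hj
    rw [mem_Icc] at hj
    by_cases hbj : b j = 0
    · simp [hbj]
    · have hbjpos : 0 < b j :=
        lt_of_le_of_ne (hb0 ▸ hmono 0 j (by linarith) (by linarith) hj.2) (Ne.symm hbj)
      have hbneg : b (j - k - 1) = 0 := by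
        by_contra hne
        have hbn : b (j - k - 1) < 0 :=
          lt_of_le_of_ne (hb0 ▸ hmono (j - k - 1) 0 (by linarith) (by linarith) (by linarith)) hne
        have hsub : S ⊆ Finset.Icc (j - k) (j - 1) := by
          intro i hi
          have hiI := mem_Icc.mp (hSsub hi)
          have hbi := hSzero i hi
          rw [mem_Icc]
          constructor
          · by_contra h
            push_neg at h
            have : b i ≤ b (j - k - 1) := hmono i (j - k - 1) hiI.1 (by omega) (by omega)
            linarith [hbi ▸ this]
          · by_contra h
            push_neg at h
            have : b j ≤ b i := hmono j i (by linarith) (by omega) hiI.2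
            linarith [hbi ▸ this]
        have hc := Finset.card_le_card hsub
        rw [Int.card_Icc] at hc
        omega
      have hbk : b (j - k) = 0 :=
        le_antisymm (hb0 ▸ hmono (j - k) 0 (by linarith) (by linarith) (by linarith))
          (hbneg ▸ hmono (j - k - 1) (j - k) (by linarith) (by linarith) (by linarith))
      simp [hbneg, hbk]
  -- negative-side cross terms vanish
  have hcross2 : ∀ j ∈ Finset.Icc (-k) (-1:ℤ),
      |b j| * (2 * (k : ℝ) + 1 + 2 * (j : ℝ)) * (|b (j + k + 1)| - |b (j + k)|) = 0 := by
    intro j hj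
    rw [mem_Icc] at hj
    by_cases hbj : b j = 0
    · simp [hbj]
    · have hbjneg : b j < 0 :=
        lt_of_le_of_ne (hb0 ▸ hmono j 0 (by linarith) (by linarith) (by linarith)) hbj
      have hbpos : b (j + k + 1) = 0 := by
        by_contra hne
        have hbn : 0 < b (j + k + 1) :=
          lt_of_le_of_ne (hb0 ▸ hmono 0 (j + k + 1) (by linarith) (by linarith) (by linarith))
            (Ne.symm hne)
        have hsub : S ⊆ Finset.Icc (j + 1) (j + k) := by
          intro i hi
          have hiI := mem_Icc.mp (hSsub hi)
          have hbi := hSzero i hi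
          rw [mem_Icc]
          constructor
          · by_contra h
            push_neg at h
            have : b i ≤ b j := hmono i j hiI.1 (by omega) (by omega)
            linarith [hbi ▸ this]
          · by_contra h
            push_neg at h
            have : b (j + k + 1) ≤ b i := hmono (j + k + 1) i (by linarith) (by omega) hiI.2
            linarith [hbi ▸ this]
        have hc := Finset.card_le_card hsub
        rw [Int.card_Icc] at hc
        omega
      have hbk : b (j + k) = 0 :=
        le_antisymm (hbpos ▸ hmono (j + k) (j + k + 1) (by linarith) (by linarith) (by linarith))
          (hb0 ▸ hmono 0 (j + k) (by linarith) (by linarith) (by linarith))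
      simp [hbpos, hbk]
  set T : ℝ := ∑ i ∈ Finset.Icc (-k) k, |b i| with hT
  have hTpos : 0 < T :=
    Finset.sum_pos' (fun i _ => abs_nonneg _)
      ⟨i0, mem_Icc.mpr ⟨hi0l, hi0r⟩, abs_pos.mpr hi0⟩
  have hA : ∑ i ∈ Finset.Icc (-k) k, (4 * |(i : ℝ)| / (2 * (k : ℝ) + 1)) * |b i|
      ≤ (4 * (k : ℝ) / (2 * (k : ℝ) + 1)) * T := by
    rw [hT, Finset.mul_sum]
    refine Finset.sum_le_sum fun i hi => ?_
    have hiI := mem_Icc.mp hi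
    have habs : |(i : ℝ)| ≤ (k : ℝ) := by
      rw [abs_le]
      constructor <;> [exact_mod_cast hiI.1; exact_mod_cast hiI.2]
    refine mul_le_mul_of_nonneg_right ?_ (abs_nonneg _)
    gcongr
  have hPhi : Phi k b ≤ (4 * (k : ℝ) / (2 * (k : ℝ) + 1)) * T + T := by
    unfold Phi
    rw [Finset.sum_eq_zero hcross1, Finset.sum_eq_zero hcross2, ← hT]
    linarith
  have hkey : (4 * (k : ℝ) / (2 * (k : ℝ) + 1)) * T + T
      = (3 / 2 - 1 / (2 * (k : ℝ) + 1)) * (2 * T) := by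
    field_simp
    ring
  have hDd : Dd k b = 2 * T := rfl
  have h2 : Phi k b ≤ (3 / 2 - 1 / (2 * (k : ℝ) + 1)) * Dd k b := by
    rw [hDd]; linarith [hkey ▸ hPhi]
  refine ⟨?_, h2⟩
  rw [phi, div_le_iff₀ (by rw [hDd]; linarith)]
  exact h2

end
end

section
/- Let b^@ be the profile defined by b^@ i = 0 for −k ≤ i ≤ k−1 and b^@ k = 1/2. Then b^@ is an admissible dominated profile and φ(b^@) = 3/2 − 1/(2k+1); i.e., the bound 3/2 − 1/n for dominated profiles is attained. -/
open Finset

noncomputable section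

/-- The profile `b^@` with `b^@ i = 0` for `-k ≤ i ≤ k-1` and `b^@ k = 1/2` is an admissible
dominated profile attaining `φ(b^@) = 3/2 − 1/(2k+1)`. -/
theorem phi_witness_dominated (k : ℤ) (hk : 1 ≤ k) :
    IsAdmissible k (fun i : ℤ => if i = k then (1 / 2 : ℝ) else 0) ∧
    IsDominated k (fun i : ℤ => if i = k then (1 / 2 : ℝ) else 0) ∧
    phi k (fun i : ℤ => if i = k then (1 / 2 : ℝ) else 0) =
      3 / 2 - 1 / (2 * (k : ℝ) + 1) := by
  set b : ℤ → ℝ := fun i : ℤ => if i = k then (1 / 2 : ℝ) else 0 with hb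
  have hbabs : ∀ i : ℤ, |b i| = if i = k then (1 / 2 : ℝ) else 0 := by
    intro i; by_cases h : i = k <;> simp [hb, h]
  have hsum : ∑ i ∈ Finset.Icc (-k) k, |b i| = 1 / 2 := by
    rw [Finset.sum_eq_single k]
    · simp [hbabs]
    · intro i _ hi; simp [hbabs, hi]
    · intro h; exact absurd (Finset.mem_Icc.mpr ⟨by linarith, le_refl k⟩) h
  refine ⟨⟨⟨?_, ?_, ?_⟩, ⟨k, by linarith, le_refl k, by norm_num [hb]⟩⟩, ?_, ?_⟩
  · intro i j _ hij hjk
    by_cases hi : i = k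
    · have : j = k := le_antisymm hjk (hi ▸ hij)
      simp [hb, hi, this]
    · by_cases hj : j = k <;> simp [hb, hi, hj] <;> norm_num
  · intro i _ _
    by_cases hi : i = k <;> simp [hb, hi] <;> norm_num
  · simp [hb]; intro h; omega
  · refine ⟨Finset.Icc (-k) (k - 1), fun i hi => ?_, ?_, fun i hi => ?_⟩
    · simp only [Finset.mem_Icc] at hi ⊢; omega
    · rw [Int.card_Icc]; simp; omega
    · simp only [Finset.mem_Icc] at hi
      have : i ≠ k := by omega
      simp [hb, this]
  · have hkR : (0:ℝ) < 2 * (k : ℝ) + 1 := by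
      have : (1:ℝ) ≤ (k:ℝ) := by exact_mod_cast hk
      linarith
    have h1 : ∑ i ∈ Finset.Icc (-k) k, (4 * |(i : ℝ)| / (2 * (k : ℝ) + 1)) * |b i|
        = 4 * (k:ℝ) / (2 * (k:ℝ) + 1) * (1/2) := by
      rw [Finset.sum_eq_single k]
      · rw [hbabs]; simp [abs_of_pos (show (0:ℝ) < (k:ℝ) by exact_mod_cast hk)]
      · intro i _ hi; simp [hbabs, hi]
      · intro h; exact absurd (Finset.mem_Icc.mpr ⟨by linarith, le_refl k⟩) h
    have h3 : ∑ j ∈ Finset.Icc 1 k,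
        |b j| * (2 * (k : ℝ) + 1 - 2 * (j : ℝ)) * (|b (j - k - 1)| - |b (j - k)|) = 0 := by
      apply Finset.sum_eq_zero
      intro j hj
      rw [Finset.mem_Icc] at hj
      by_cases h : j = k
      · have h1 : j - k - 1 ≠ k := by omega
        have h2 : j - k ≠ k := by omega
        rw [hbabs (j - k - 1), hbabs (j - k)]
        simp [h1, h2]
      · rw [hbabs j]; simp [h]
    have h4 : ∑ j ∈ Finset.Icc (-k) (-1),
        |b j| * (2 * (k : ℝ) + 1 + 2 * (j : ℝ)) * (|b (j + k + 1)| - |b (j + k)|) = 0 := by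
      apply Finset.sum_eq_zero
      intro j hj
      rw [Finset.mem_Icc] at hj
      have h : j ≠ k := by omega
      rw [hbabs j]; simp [h]
    rw [phi, Phi, Dd, hsum, h1, h3, h4]
    field_simp
    ring

end
end

section
/- For an admissible profile b, let w(b) be the number of distinct values in {b i : −k ≤ i ≤ k} that do not belong to {−1/2, 0, 1/2}. If w(b) > 0, then there exists an admissible profile b' with w(b') < w(b) and φ(b') ≥ φ(b). -/
open Finset

noncomputable section

open Classical in
/-- `w(b)`: the number of distinct values of `b` on `{-k, …, k}` outside `{-1/2, 0, 1/2}`. -/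
noncomputable def wval (k : ℤ) (b : ℤ → ℝ) : ℕ :=
  (((Finset.Icc (-k) k).image b).filter
    fun v => v ≠ -(1 / 2) ∧ v ≠ 0 ∧ v ≠ 1 / 2).card


lemma mediant (a b c d : ℝ) (hc : 0 ≤ c) (hd : 0 < d) (hca : c = 0 → a = 0) :
    (a + b) / (c + d) ≤ max (a / c) (b / d) := by
  rcases hc.eq_or_lt with h | h
  · rw [← h, hca h.symm, zero_add, zero_add]
    simpa using le_max_right ((0:ℝ)/0) (b/d)
  · have hcd : 0 < c + d := by linarith
    rw [div_le_iff₀ hcd]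
    have h1 : a ≤ max (a/c) (b/d) * c :=
      (div_le_iff₀ h).mp (le_max_left _ _)
    have h2 : b ≤ max (a/c) (b/d) * d :=
      (div_le_iff₀ hd).mp (le_max_right _ _)
    nlinarith

lemma dd_nonneg (k : ℤ) (b : ℤ → ℝ) : 0 ≤ Dd k b := by
  unfold Dd
  have : 0 ≤ ∑ i ∈ Finset.Icc (-k) k, |b i| :=
    Finset.sum_nonneg fun i _ => abs_nonneg _
  linarith

lemma dd_zero (k : ℤ) (b : ℤ → ℝ) (h : Dd k b = 0) :
    ∀ i ∈ Finset.Icc (-k) k, b i = 0 := by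
  unfold Dd at h
  have h2 : ∑ i ∈ Finset.Icc (-k) k, |b i| = 0 := by linarith
  intro i hi
  have := (Finset.sum_eq_zero_iff_of_nonneg (fun i _ => abs_nonneg (b i))).mp h2 i hi
  exact abs_eq_zero.mp this

lemma diff_nonneg_left (k : ℤ) (b : ℤ → ℝ) (hb : IsNormalized k b)
    (j : ℤ) (hj : j ∈ Finset.Icc 1 k) : 0 ≤ |b (j - k - 1)| - |b (j - k)| := by
  obtain ⟨hmono, _, h0⟩ := hb
  rw [Finset.mem_Icc] at hj
  have h1 : b (j - k) ≤ 0 := by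
    have := hmono (j - k) 0 (by omega) (by omega) (by omega); linarith [h0 ▸ this]
  have h2 : b (j - k - 1) ≤ b (j - k) := hmono _ _ (by omega) (by omega) (by omega)
  rw [abs_of_nonpos (by linarith), abs_of_nonpos h1]
  linarith

lemma diff_nonneg_right (k : ℤ) (b : ℤ → ℝ) (hb : IsNormalized k b)
    (j : ℤ) (hj : j ∈ Finset.Icc (-k) (-1)) : 0 ≤ |b (j + k + 1)| - |b (j + k)| := by
  obtain ⟨hmono, _, h0⟩ := hb
  rw [Finset.mem_Icc] at hj
  have h1 : 0 ≤ b (j + k) := by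
    have := hmono 0 (j + k) (by omega) (by omega) (by omega); linarith [h0 ▸ this]
  have h2 : b (j + k) ≤ b (j + k + 1) := hmono _ _ (by omega) (by omega) (by omega)
  rw [abs_of_nonneg (by linarith), abs_of_nonneg h1]
  linarith

lemma phi_nonneg (k : ℤ) (hk : 1 ≤ k) (b : ℤ → ℝ) (hb : IsNormalized k b) :
    0 ≤ Phi k b := by
  have hkR : (1:ℝ) ≤ (k:ℝ) := by exact_mod_cast hk
  unfold Phi
  have s1 : 0 ≤ ∑ i ∈ Finset.Icc (-k) k, (4 * |(i : ℝ)| / (2 * (k : ℝ) + 1)) * |b i| :=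
    Finset.sum_nonneg fun i _ => mul_nonneg (div_nonneg (by positivity) (by linarith)) (abs_nonneg _)
  have s2 : 0 ≤ ∑ j ∈ Finset.Icc (-k) k, |b j| :=
    Finset.sum_nonneg fun j _ => abs_nonneg _
  have s3 : 0 ≤ ∑ j ∈ Finset.Icc 1 k,
      |b j| * (2 * (k : ℝ) + 1 - 2 * (j : ℝ)) * (|b (j - k - 1)| - |b (j - k)|) := by
    apply Finset.sum_nonneg
    intro j hj
    have hj' := Finset.mem_Icc.mp hj
    have hjR : (j:ℝ) ≤ (k:ℝ) := by exact_mod_cast hj'.2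
    exact mul_nonneg (mul_nonneg (abs_nonneg _) (by linarith)) (diff_nonneg_left k b hb j hj)
  have s4 : 0 ≤ ∑ j ∈ Finset.Icc (-k) (-1),
      |b j| * (2 * (k : ℝ) + 1 + 2 * (j : ℝ)) * (|b (j + k + 1)| - |b (j + k)|) := by
    apply Finset.sum_nonneg
    intro j hj
    have hj' := Finset.mem_Icc.mp hj
    have hjR : (-k:ℝ) ≤ (j:ℝ) := by exact_mod_cast hj'.1
    have : (-(k:ℝ)) ≤ (j:ℝ) := by push_cast at hjR ⊢; linarith
    exact mul_nonneg (mul_nonneg (abs_nonneg _) (by linarith)) (diff_nonneg_right k b hb j hj)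
  linarith

lemma phi_zero (k : ℤ) (hk : 1 ≤ k) (b : ℤ → ℝ)
    (h : ∀ i ∈ Finset.Icc (-k) k, b i = 0) : Phi k b = 0 := by
  unfold Phi
  have z : ∀ i ∈ Finset.Icc (-k) k, |b i| = 0 := fun i hi => by rw [h i hi, abs_zero]
  have s1 : ∑ i ∈ Finset.Icc (-k) k, (4 * |(i : ℝ)| / (2 * (k : ℝ) + 1)) * |b i| = 0 :=
    Finset.sum_eq_zero fun i hi => by rw [z i hi, mul_zero]
  have s2 : ∑ j ∈ Finset.Icc (-k) k, |b j| = 0 := Finset.sum_eq_zero z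
  have s3 : ∑ j ∈ Finset.Icc 1 k,
      |b j| * (2 * (k : ℝ) + 1 - 2 * (j : ℝ)) * (|b (j - k - 1)| - |b (j - k)|) = 0 := by
    apply Finset.sum_eq_zero
    intro j hj
    have hj' := Finset.mem_Icc.mp hj
    rw [z j (Finset.mem_Icc.mpr (by omega)), zero_mul, zero_mul]
  have s4 : ∑ j ∈ Finset.Icc (-k) (-1),
      |b j| * (2 * (k : ℝ) + 1 + 2 * (j : ℝ)) * (|b (j + k + 1)| - |b (j + k)|) = 0 := by
    apply Finset.sum_eq_zero
    intro j hj
    have hj' := Finset.mem_Icc.mp hj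
    rw [z j (Finset.mem_Icc.mpr (by omega)), zero_mul, zero_mul]
  rw [s1, s2, s3, s4]; ring
open Classical in
lemma wval_lt (k : ℤ) (b b' : ℤ → ℝ) (v c : ℝ)
    (hv : v ∈ (Finset.Icc (-k) k).image b)
    (hvnb : v ≠ -(1/2) ∧ v ≠ 0 ∧ v ≠ 1/2)
    (hb' : ∀ i, b' i = if b i = v then c else b i)
    (hc : (∃ i ∈ Finset.Icc (-k) k, b i ≠ v ∧ b i = c) ∨ c = -(1/2) ∨ c = 0 ∨ c = 1/2) :
    wval k b' < wval k b := by
  classical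
  unfold wval
  set P : ℝ → Prop := fun x => x ≠ -(1/2) ∧ x ≠ 0 ∧ x ≠ 1/2 with hP
  have hvF : v ∈ ((Finset.Icc (-k) k).image b).filter P :=
    Finset.mem_filter.mpr ⟨hv, hvnb⟩
  have hsub : ((Finset.Icc (-k) k).image b').filter P ⊆
      (((Finset.Icc (-k) k).image b).filter P).erase v := by
    intro x hx
    obtain ⟨hxim, hxP⟩ := Finset.mem_filter.mp hx
    obtain ⟨i, hi, hxi⟩ := Finset.mem_image.mp hxim
    rw [hb' i] at hxi
    by_cases hbi : b i = v
    · rw [if_pos hbi] at hxi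
      subst hxi
      rcases hc with ⟨i0, hi0, hne0, hc0⟩ | h | h | h
      · apply Finset.mem_erase.mpr
        refine ⟨by rw [← hc0]; exact hne0, Finset.mem_filter.mpr ⟨?_, hxP⟩⟩
        exact Finset.mem_image.mpr ⟨i0, hi0, hc0⟩
      · exact absurd h hxP.1
      · exact absurd h hxP.2.1
      · exact absurd h hxP.2.2
    · rw [if_neg hbi] at hxi
      subst hxi
      exact Finset.mem_erase.mpr ⟨hbi, Finset.mem_filter.mpr
        ⟨Finset.mem_image.mpr ⟨i, hi, rfl⟩, hxP⟩⟩
  calc (((Finset.Icc (-k) k).image b').filter P).card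
      ≤ ((((Finset.Icc (-k) k).image b).filter P).erase v).card := Finset.card_le_card hsub
    _ < (((Finset.Icc (-k) k).image b).filter P).card := by
        rw [Finset.card_erase_of_mem hvF]
        exact Nat.sub_lt (Finset.card_pos.mpr ⟨v, hvF⟩) one_pos

lemma sum_negIcc (lo hi : ℤ) (f : ℤ → ℝ) :
    ∑ j ∈ Finset.Icc (-hi) (-lo), f j = ∑ j ∈ Finset.Icc lo hi, f (-j) := by
  apply Finset.sum_nbij' (fun j => -j) (fun j => -j) <;>
    intros <;> simp_all [Finset.mem_Icc] <;> omega

lemma sum_symm (k : ℤ) (f : ℤ → ℝ) :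
    ∑ i ∈ Finset.Icc (-k) k, f i = ∑ i ∈ Finset.Icc (-k) k, f (-i) := by
  apply Finset.sum_nbij' (fun j => -j) (fun j => -j) <;>
    intros <;> simp_all [Finset.mem_Icc] <;> omega

lemma Phi_refl (k : ℤ) (b : ℤ → ℝ) : Phi k (fun i => -b (-i)) = Phi k b := by
  unfold Phi
  have e1 : ∑ i ∈ Finset.Icc (-k) k, (4 * |(i : ℝ)| / (2 * (k : ℝ) + 1)) * |(fun i => -b (-i)) i|
      = ∑ i ∈ Finset.Icc (-k) k, (4 * |(i : ℝ)| / (2 * (k : ℝ) + 1)) * |b i| := by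
    rw [sum_symm]
    apply Finset.sum_congr rfl
    intro i _
    simp only [abs_neg, neg_neg, Int.cast_neg]
  have e2 : ∑ j ∈ Finset.Icc (-k) k, |(fun i => -b (-i)) j|
      = ∑ j ∈ Finset.Icc (-k) k, |b j| := by
    rw [sum_symm]
    apply Finset.sum_congr rfl
    intro i _
    simp [abs_neg]
  have e3 : ∑ j ∈ Finset.Icc (-k) (-1),
      |b j| * (2 * (k : ℝ) + 1 + 2 * (j : ℝ)) * (|b (j + k + 1)| - |b (j + k)|)
      = ∑ j ∈ Finset.Icc 1 k,
        |(fun i => -b (-i)) j| * (2 * (k : ℝ) + 1 - 2 * (j : ℝ)) *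
          (|(fun i => -b (-i)) (j - k - 1)| - |(fun i => -b (-i)) (j - k)|) := by
    rw [sum_negIcc 1 k]
    apply Finset.sum_congr rfl
    intro j _
    have i1 : -(j - k - 1) = -j + k + 1 := by ring
    have i2 : -(j - k) = -j + k := by ring
    simp only [abs_neg, i1, i2]
    push_cast
    ring
  have e4 : ∑ j ∈ Finset.Icc (-k) (-1),
      |(fun i => -b (-i)) j| * (2 * (k : ℝ) + 1 + 2 * (j : ℝ)) *
        (|(fun i => -b (-i)) (j + k + 1)| - |(fun i => -b (-i)) (j + k)|)
      = ∑ j ∈ Finset.Icc 1 k,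
          |b j| * (2 * (k : ℝ) + 1 - 2 * (j : ℝ)) * (|b (j - k - 1)| - |b (j - k)|) := by
    rw [sum_negIcc 1 k]
    apply Finset.sum_congr rfl
    intro j _
    have i1 : -(-j + k + 1) = j - k - 1 := by ring
    have i2 : -(-j + k) = j - k := by ring
    simp only [abs_neg, neg_neg, i1, i2]
    push_cast
    ring
  rw [e1, e2, ← e3, e4]
  ring

lemma Dd_refl (k : ℤ) (b : ℤ → ℝ) : Dd k (fun i => -b (-i)) = Dd k b := by
  unfold Dd
  congr 1
  rw [sum_symm]
  apply Finset.sum_congr rfl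
  intro i _
  simp [abs_neg]
lemma isNormalized_refl (k : ℤ) (b : ℤ → ℝ) (hb : IsNormalized k b) :
    IsNormalized k (fun i => -b (-i)) := by
  obtain ⟨hmono, hrange, h0⟩ := hb
  refine ⟨?_, ?_, by simpa using h0⟩
  · intro i j hi hij hj
    have := hmono (-j) (-i) (by omega) (by omega) (by omega)
    simpa using this
  · intro i hi hik
    have := hrange (-i) (by omega) (by omega)
    simp only [Set.mem_Icc] at this ⊢
    constructor <;> linarith [this.1, this.2]

lemma isAdmissible_refl (k : ℤ) (b : ℤ → ℝ) (hb : IsAdmissible k b) :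
    IsAdmissible k (fun i => -b (-i)) := by
  obtain ⟨hn, i, hi1, hi2, hi3⟩ := hb
  exact ⟨isNormalized_refl k b hn, ⟨-i, by omega, by omega, by simpa using hi3⟩⟩

open Classical in
lemma wval_refl_le (k : ℤ) (b : ℤ → ℝ) : wval k (fun i => -b (-i)) ≤ wval k b := by
  classical
  unfold wval
  set P : ℝ → Prop := fun x => x ≠ -(1/2) ∧ x ≠ 0 ∧ x ≠ 1/2 with hP
  have hsub : ((Finset.Icc (-k) k).image (fun i => -b (-i))).filter P ⊆
      (((Finset.Icc (-k) k).image b).filter P).image Neg.neg := by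
    intro x hx
    obtain ⟨hxim, hxP⟩ := Finset.mem_filter.mp hx
    obtain ⟨i, hi, hxi⟩ := Finset.mem_image.mp hxim
    rw [Finset.mem_Icc] at hi
    refine Finset.mem_image.mpr ⟨b (-i), Finset.mem_filter.mpr
      ⟨Finset.mem_image.mpr ⟨-i, Finset.mem_Icc.mpr (by omega), rfl⟩, ?_⟩, by
        rw [← hxi]⟩
    obtain ⟨p1, p2, p3⟩ := hxP
    rw [← hxi] at p1 p2 p3
    refine ⟨fun h => p3 ?_, fun h => p2 ?_, fun h => p1 ?_⟩ <;> rw [h] <;> norm_num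
  calc (((Finset.Icc (-k) k).image (fun i => -b (-i))).filter P).card
      ≤ ((((Finset.Icc (-k) k).image b).filter P).image Neg.neg).card :=
        Finset.card_le_card hsub
    _ ≤ (((Finset.Icc (-k) k).image b).filter P).card := Finset.card_image_le
/-- Update: replace value `v` by `t`. -/
def upd (b : ℤ → ℝ) (v t : ℝ) : ℤ → ℝ := fun i => if b i = v then t else b i

open Classical in
lemma main_pos (k : ℤ) (hk : 1 ≤ k) (b : ℤ → ℝ) (hb : IsAdmissible k b)
    (v : ℝ) (hvmem : v ∈ (Finset.Icc (-k) k).image b) (hvpos : 0 < v)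
    (hvhalf : v ≠ 1 / 2) :
    ∃ b' : ℤ → ℝ, IsAdmissible k b' ∧ wval k b' < wval k b ∧ phi k b ≤ phi k b' := by
  classical
  obtain ⟨⟨hmono, hrange, h0⟩, -⟩ := hb
  set S : Finset ℤ := (Finset.Icc (-k) k).filter (fun i => b i = v) with hSdef
  have hSne : S.Nonempty := by
    obtain ⟨i, hi, hbi⟩ := Finset.mem_image.mp hvmem
    exact ⟨i, Finset.mem_filter.mpr ⟨hi, hbi⟩⟩
  set m := S.min' hSne with hmdef
  set M := S.max' hSne with hMdef
  have hmS : m ∈ S := S.min'_mem hSne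
  have hMS : M ∈ S := S.max'_mem hSne
  have hbm : b m = v := (Finset.mem_filter.mp hmS).2
  have hbM : b M = v := (Finset.mem_filter.mp hMS).2
  have hmIcc := Finset.mem_Icc.mp (Finset.mem_filter.mp hmS).1
  have hMIcc := Finset.mem_Icc.mp (Finset.mem_filter.mp hMS).1
  have hm1 : 1 ≤ m := by
    by_contra h
    have : b m ≤ b 0 := hmono m 0 (by omega) (by omega) (by omega)
    rw [hbm, h0] at this; linarith
  set L : ℝ := b (m - 1) with hLdef
  set U : ℝ := if M = k then (1/2 : ℝ) else b (M + 1) with hUdef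
  have hL0 : 0 ≤ L := by
    have := hmono 0 (m - 1) (by omega) (by omega) (by omega)
    rw [h0] at this; exact this
  have hLv : L < v := by
    have hle : L ≤ v := by
      have := hmono (m - 1) m (by omega) (by omega) (by omega)
      rw [hbm] at this; exact this
    rcases hle.lt_or_eq with h | h
    · exact h
    · exfalso
      have : m - 1 ∈ S := Finset.mem_filter.mpr ⟨Finset.mem_Icc.mpr (by omega), h⟩
      have := S.min'_le _ this
      omega
  have hvhalf' : v ≤ 1/2 := by
    have := hrange M (by omega) (by omega)
    rw [hbM] at this; exact this.2
  have hUv : v < U := by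
    rw [hUdef]
    by_cases hMk : M = k
    · rw [if_pos hMk]
      exact lt_of_le_of_ne hvhalf' hvhalf
    · rw [if_neg hMk]
      have hle : v ≤ b (M + 1) := by
        have := hmono M (M + 1) (by omega) (by omega) (by omega)
        rw [hbM] at this; exact this
      rcases hle.lt_or_eq with h | h
      · exact h
      · exfalso
        have : M + 1 ∈ S := Finset.mem_filter.mpr ⟨Finset.mem_Icc.mpr (by omega), h.symm⟩
        have := S.le_max' _ this
        omega
  have hU2 : U ≤ 1/2 := by
    rw [hUdef]
    by_cases hMk : M = k
    · rw [if_pos hMk]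
    · rw [if_neg hMk]
      exact (hrange (M + 1) (by omega) (by omega)).2
  have hUhigh : ∀ i, -k ≤ i → i ≤ k → v < b i → U ≤ b i := by
    intro i hi1 hi2 hvi
    have hMi : M + 1 ≤ i := by
      by_contra h
      have : b i ≤ b M := hmono i M hi1 (by omega) (by omega)
      rw [hbM] at this; linarith
    have hMk : M ≠ k := by omega
    rw [hUdef, if_neg hMk]
    exact hmono (M + 1) i (by omega) hMi hi2
  have hLlow : ∀ i, -k ≤ i → i ≤ k → b i < v → b i ≤ L := by
    intro i hi1 hi2 hvi
    have him : i ≤ m - 1 := by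
      by_contra h
      have : b m ≤ b i := hmono m i (by omega) (by omega) hi2
      rw [hbm] at this; linarith
    exact hmono i (m - 1) hi1 him (by omega)
  -- fixed values at nonpositive indices
  have hbneg : ∀ i, -k ≤ i → i ≤ 0 → b i ≤ 0 := by
    intro i h1 h2
    have := hmono i 0 h1 h2 (by omega)
    rw [h0] at this; exact this
  have hfix : ∀ (t : ℝ) (i : ℤ), -k ≤ i → i ≤ 0 → upd b v t i = b i := by
    intro t i h1 h2
    have hne : b i ≠ v := by
      intro h; have := hbneg i h1 h2; rw [h] at this; linarith
    simp only [upd, if_neg hne]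
  have hupd_self : upd b v v = b := by
    funext i
    by_cases h : b i = v <;> simp [upd, h]
  -- normalization of perturbed profiles
  have hnormt : ∀ t : ℝ, L ≤ t → t ≤ U → IsNormalized k (upd b v t) := by
    intro t htL htU
    refine ⟨?_, ?_, ?_⟩
    · intro i j hi hij hj
      simp only [upd]
      by_cases hbi : b i = v <;> by_cases hbj : b j = v
      · rw [if_pos hbi, if_pos hbj]
      · rw [if_pos hbi, if_neg hbj]
        have h1 : v ≤ b j := by
          have := hmono i j hi hij hj; rw [hbi] at this; exact this
        have h2 : v < b j := lt_of_le_of_ne h1 (Ne.symm hbj)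
        exact le_trans htU (hUhigh j (by omega) hj h2)
      · rw [if_neg hbi, if_pos hbj]
        have h1 : b i ≤ v := by
          have := hmono i j hi hij hj; rw [hbj] at this; exact this
        have h2 : b i < v := lt_of_le_of_ne h1 hbi
        exact le_trans (hLlow i hi (by omega) h2) htL
      · rw [if_neg hbi, if_neg hbj]
        exact hmono i j hi hij hj
    · intro i hi1 hi2
      by_cases h : b i = v
      · simp only [upd, if_pos h, Set.mem_Icc]
        constructor <;> linarith
      · simp only [upd, if_neg h]
        exact hrange i hi1 hi2
    · rw [hfix t 0 (by omega) le_rfl, h0]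
  -- convex combination parameter
  set s : ℝ := (v - L) / (U - L) with hsdef
  have hUL : 0 < U - L := by linarith
  have hs0 : 0 < s := div_pos (by linarith) hUL
  have hs1 : s < 1 := (div_lt_one hUL).mpr (by linarith)
  have hv_comb : v = (1 - s) * L + s * U := by
    have h1 : s * (U - L) = v - L := div_mul_cancel₀ _ (ne_of_gt hUL)
    nlinarith [h1]
  have hU0 : 0 ≤ U := by linarith
  have habs : ∀ (t : ℝ), 0 ≤ t → ∀ i, |upd b v t i| = if b i = v then t else |b i| := by
    intro t ht i
    by_cases h : b i = v <;> simp [upd, h, abs_of_nonneg ht]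
  have hcomb : ∀ i, |upd b v v i| = (1 - s) * |upd b v L i| + s * |upd b v U i| := by
    intro i
    rw [habs v hvpos.le, habs L hL0, habs U hU0]
    by_cases h : b i = v
    · simp only [if_pos h]; exact hv_comb
    · simp only [if_neg h]; ring
  have lincomb : ∀ (T : Finset ℤ) (f fL fU : ℤ → ℝ),
      (∀ i ∈ T, f i = (1 - s) * fL i + s * fU i) →
      ∑ i ∈ T, f i = (1 - s) * ∑ i ∈ T, fL i + s * ∑ i ∈ T, fU i := by
    intro T f fL fU h
    rw [Finset.mul_sum, Finset.mul_sum, ← Finset.sum_add_distrib]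
    exact Finset.sum_congr rfl h
  -- affinity of Phi
  have hPhiAff : Phi k (upd b v v) =
      (1 - s) * Phi k (upd b v L) + s * Phi k (upd b v U) := by
    unfold Phi
    have H1 := lincomb (Finset.Icc (-k) k)
      (fun i => (4 * |(i : ℝ)| / (2 * (k : ℝ) + 1)) * |upd b v v i|)
      (fun i => (4 * |(i : ℝ)| / (2 * (k : ℝ) + 1)) * |upd b v L i|)
      (fun i => (4 * |(i : ℝ)| / (2 * (k : ℝ) + 1)) * |upd b v U i|)
      (fun i _ => by beta_reduce; rw [hcomb i]; ring)
    have H2 := lincomb (Finset.Icc (-k) k)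
      (fun j => |upd b v v j|) (fun j => |upd b v L j|) (fun j => |upd b v U j|)
      (fun j _ => by beta_reduce; exact hcomb j)
    have H3 := lincomb (Finset.Icc 1 k)
      (fun j => |upd b v v j| * (2 * (k : ℝ) + 1 - 2 * (j : ℝ)) *
        (|upd b v v (j - k - 1)| - |upd b v v (j - k)|))
      (fun j => |upd b v L j| * (2 * (k : ℝ) + 1 - 2 * (j : ℝ)) *
        (|upd b v L (j - k - 1)| - |upd b v L (j - k)|))
      (fun j => |upd b v U j| * (2 * (k : ℝ) + 1 - 2 * (j : ℝ)) *
        (|upd b v U (j - k - 1)| - |upd b v U (j - k)|))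
      (fun j hj => by
        beta_reduce
        have hj' := Finset.mem_Icc.mp hj
        rw [hfix v (j - k - 1) (by omega) (by omega), hfix v (j - k) (by omega) (by omega),
          hfix L (j - k - 1) (by omega) (by omega), hfix L (j - k) (by omega) (by omega),
          hfix U (j - k - 1) (by omega) (by omega), hfix U (j - k) (by omega) (by omega),
          hcomb j]
        ring)
    have H4 := lincomb (Finset.Icc (-k) (-1))
      (fun j => |upd b v v j| * (2 * (k : ℝ) + 1 + 2 * (j : ℝ)) *
        (|upd b v v (j + k + 1)| - |upd b v v (j + k)|))
      (fun j => |upd b v L j| * (2 * (k : ℝ) + 1 + 2 * (j : ℝ)) *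
        (|upd b v L (j + k + 1)| - |upd b v L (j + k)|))
      (fun j => |upd b v U j| * (2 * (k : ℝ) + 1 + 2 * (j : ℝ)) *
        (|upd b v U (j + k + 1)| - |upd b v U (j + k)|))
      (fun j hj => by
        beta_reduce
        have hj' := Finset.mem_Icc.mp hj
        rw [hfix v j (by omega) (by omega), hfix L j (by omega) (by omega),
          hfix U j (by omega) (by omega),
          hcomb (j + k + 1), hcomb (j + k)]
        ring)
    rw [H1, H2, H3, H4]
    ring
  have hDdAff : Dd k (upd b v v) =
      (1 - s) * Dd k (upd b v L) + s * Dd k (upd b v U) := by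
    unfold Dd
    have H2 := lincomb (Finset.Icc (-k) k)
      (fun j => |upd b v v j|) (fun j => |upd b v L j|) (fun j => |upd b v U j|)
      (fun j _ => by beta_reduce; exact hcomb j)
    rw [H2]
    ring
  -- positivity of denominator at U
  have hMmem : M ∈ Finset.Icc (-k) k := Finset.mem_Icc.mpr (by omega)
  have hDU_pos : 0 < Dd k (upd b v U) := by
    unfold Dd
    have h1 : |upd b v U M| ≤ ∑ i ∈ Finset.Icc (-k) k, |upd b v U i| :=
      Finset.single_le_sum (f := fun i => |upd b v U i|) (fun i _ => abs_nonneg _) hMmem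
    have h2 : |upd b v U M| = U := by
      simp only [upd, if_pos hbM, abs_of_nonneg hU0]
    nlinarith [h1, h2]
  -- the mediant bound
  have hmax : phi k b ≤ max (phi k (upd b v L)) (phi k (upd b v U)) := by
    have h1 : Phi k b = (1 - s) * Phi k (upd b v L) + s * Phi k (upd b v U) := by
      rw [← congrArg (Phi k) hupd_self]; exact hPhiAff
    have h2 : Dd k b = (1 - s) * Dd k (upd b v L) + s * Dd k (upd b v U) := by
      rw [← congrArg (Dd k) hupd_self]; exact hDdAff
    unfold phi
    rw [h1, h2]
    have hmed := mediant ((1 - s) * Phi k (upd b v L)) (s * Phi k (upd b v U))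
      ((1 - s) * Dd k (upd b v L)) (s * Dd k (upd b v U))
      (mul_nonneg (by linarith) (dd_nonneg k _)) (mul_pos hs0 hDU_pos)
      (by
        intro hc0
        have hDL0 : Dd k (upd b v L) = 0 := by
          rcases mul_eq_zero.mp hc0 with h | h
          · exfalso; linarith
          · exact h
        have := phi_zero k hk (upd b v L) (dd_zero k _ hDL0)
        rw [this, mul_zero])
    rw [mul_div_mul_left _ _ (by linarith : (1 : ℝ) - s ≠ 0),
      mul_div_mul_left _ _ (ne_of_gt hs0)] at hmed
    exact hmed
  have hvnb : v ≠ -(1/2) ∧ v ≠ 0 ∧ v ≠ 1/2 :=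
    ⟨by linarith, by linarith, hvhalf⟩
  by_cases hcomp : phi k (upd b v L) ≤ phi k (upd b v U)
  · -- use U
    refine ⟨upd b v U, ⟨hnormt U (by linarith) le_rfl, M, by omega, by omega, ?_⟩, ?_, ?_⟩
    · simp only [upd, if_pos hbM]
      linarith
    · apply wval_lt k b (upd b v U) v U hvmem hvnb (fun i => rfl)
      by_cases hMk : M = k
      · right; right; right
        rw [hUdef, if_pos hMk]
      · left
        refine ⟨M + 1, Finset.mem_Icc.mpr (by omega), ?_, ?_⟩
        · intro h
          have : M + 1 ∈ S := Finset.mem_filter.mpr ⟨Finset.mem_Icc.mpr (by omega), h⟩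
          have := S.le_max' _ this
          omega
        · rw [hUdef, if_neg hMk]
    · calc phi k b ≤ max (phi k (upd b v L)) (phi k (upd b v U)) := hmax
        _ = phi k (upd b v U) := max_eq_right hcomp
  · -- use L
    push_neg at hcomp
    have hphiU_nonneg : 0 ≤ phi k (upd b v U) :=
      div_nonneg (phi_nonneg k hk _ (hnormt U (by linarith) le_rfl)) (dd_nonneg k _)
    have hDL_ne : Dd k (upd b v L) ≠ 0 := by
      intro hDL0
      have hP : Phi k (upd b v L) = 0 := phi_zero k hk _ (dd_zero k _ hDL0)
      have : phi k (upd b v L) = 0 := by unfold phi; rw [hP, hDL0]; simp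
      rw [this] at hcomp
      linarith
    have hex : ∃ i : ℤ, -k ≤ i ∧ i ≤ k ∧ upd b v L i ≠ 0 := by
      by_contra hno
      push_neg at hno
      apply hDL_ne
      unfold Dd
      rw [Finset.sum_eq_zero fun i hi => by
        have := Finset.mem_Icc.mp hi
        rw [hno i this.1 this.2, abs_zero]]
      ring
    refine ⟨upd b v L, ⟨hnormt L le_rfl (by linarith), hex⟩, ?_, ?_⟩
    · apply wval_lt k b (upd b v L) v L hvmem hvnb (fun i => rfl)
      left
      exact ⟨m - 1, Finset.mem_Icc.mpr (by omega), by intro h; rw [← hLdef] at h; linarith, rfl⟩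
    · calc phi k b ≤ max (phi k (upd b v L)) (phi k (upd b v U)) := hmax
        _ = phi k (upd b v L) := max_eq_left (le_of_lt hcomp)
/-- If an admissible profile has a non-boundary value, then there is an admissible profile
with strictly fewer non-boundary values and at least as large a value of `φ`. -/
theorem exists_fewer_nonboundary (k : ℤ) (hk : 1 ≤ k) (b : ℤ → ℝ)
    (hb : IsAdmissible k b) (hw : 0 < wval k b) :
    ∃ b' : ℤ → ℝ, IsAdmissible k b' ∧ wval k b' < wval k b ∧ phi k b ≤ phi k b' := by
  classical
  obtain ⟨v, hvF⟩ := Finset.card_pos.mp hw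
  obtain ⟨hvmem, hv1, hv2, hv3⟩ := Finset.mem_filter.mp hvF
  rcases lt_trichotomy v 0 with hneg | hzero | hpos
  · -- reflect and use main_pos on the mirrored profile
    have hmem' : -v ∈ (Finset.Icc (-k) k).image (fun i => -b (-i)) := by
      obtain ⟨i, hi, hbi⟩ := Finset.mem_image.mp hvmem
      rw [Finset.mem_Icc] at hi
      exact Finset.mem_image.mpr ⟨-i, Finset.mem_Icc.mpr (by omega), by simp [hbi]⟩
    have hhalf : -v ≠ 1 / 2 := by
      intro h
      exact hv1 (by linarith)
    obtain ⟨b'', hadm'', hw'', hphi''⟩ :=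
      main_pos k hk (fun i => -b (-i)) (isAdmissible_refl k b hb) (-v) hmem'
        (by linarith) hhalf
    refine ⟨b'', hadm'', ?_, ?_⟩
    · exact lt_of_lt_of_le hw'' (wval_refl_le k b)
    · have : phi k b = phi k (fun i => -b (-i)) := by
        unfold phi
        rw [Phi_refl, Dd_refl]
      rw [this]
      exact hphi''
  · exact absurd hzero hv2
  · exact main_pos k hk b hb v hvmem hpos hv3

end
end

section
/- For every admissible profile b there exists an admissible boundary profile b* (one with b* i ∈ {−1/2, 0, 1/2} for all i ∈ {−k,…,k}) such that φ(b) ≤ φ(b*). -/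
open Finset

noncomputable section

/-! ### Auxiliary machinery -/

/-- Mediant-type inequality: a ratio of weighted sums is bounded by the best term ratio. -/
lemma mediant_lemma {ι : Type*} (P : Finset ι) (lam N D : ι → ℝ)
    (hlam : ∀ p ∈ P, 0 ≤ lam p) (hD : ∀ p ∈ P, 0 ≤ D p)
    (hz : ∀ p ∈ P, D p = 0 → N p ≤ 0)
    (hpos : 0 < ∑ p ∈ P, lam p * D p) :
    ∃ p ∈ P, 0 < D p ∧
      (∑ p ∈ P, lam p * N p) / (∑ p ∈ P, lam p * D p) ≤ N p / D p := by
  have h0 : ∑ p ∈ P, (0 : ℝ) < ∑ p ∈ P, lam p * D p := by simpa using hpos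
  obtain ⟨p0, hp0P, hp0⟩ := Finset.exists_lt_of_sum_lt h0
  have hDp0 : 0 < D p0 := by
    rcases (hD p0 hp0P).lt_or_eq with h | h
    · exact h
    · exfalso; rw [← h, mul_zero] at hp0; exact lt_irrefl 0 hp0
  set T := P.filter (fun p => 0 < D p) with hT
  have hTne : T.Nonempty := ⟨p0, Finset.mem_filter.mpr ⟨hp0P, hDp0⟩⟩
  obtain ⟨q, hqT, hqmax⟩ := T.exists_max_image (fun p => N p / D p) hTne
  have hqP : q ∈ P := (Finset.mem_filter.mp hqT).1
  have hqD : 0 < D q := (Finset.mem_filter.mp hqT).2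
  refine ⟨q, hqP, hqD, ?_⟩
  set M := N q / D q with hM
  have key : ∀ p ∈ P, lam p * N p ≤ M * (lam p * D p) := by
    intro p hp
    rcases (hD p hp).lt_or_eq with h | h
    · have hpT : p ∈ T := Finset.mem_filter.mpr ⟨hp, h⟩
      have h1 : N p / D p ≤ M := hqmax p hpT
      have h2 : N p ≤ M * D p := by
        rw [div_le_iff₀ h] at h1; linarith
      have := mul_le_mul_of_nonneg_left h2 (hlam p hp)
      nlinarith
    · have h1 : N p ≤ 0 := hz p hp h.symm
      have h2 : lam p * N p ≤ 0 := mul_nonpos_of_nonneg_of_nonpos (hlam p hp) h1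
      rw [← h, mul_zero, mul_zero]; exact h2
  have hsum : ∑ p ∈ P, lam p * N p ≤ M * ∑ p ∈ P, lam p * D p := by
    rw [Finset.mul_sum]; exact Finset.sum_le_sum key
  rw [div_le_iff₀ hpos]
  linarith

/-- Generic linear decomposition swap. -/
lemma sum_decomp {P : Finset ℕ} (lam : ℕ → ℝ) (s : Finset ℤ) (c F : ℤ → ℝ)
    (G : ℕ → ℤ → ℝ) (h : ∀ i ∈ s, F i = ∑ p ∈ P, lam p * G p i) :
    ∑ i ∈ s, c i * F i = ∑ p ∈ P, lam p * ∑ i ∈ s, c i * G p i := by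
  calc ∑ i ∈ s, c i * F i
      = ∑ i ∈ s, ∑ p ∈ P, lam p * (c i * G p i) := by
        refine Finset.sum_congr rfl fun i hi => ?_
        rw [h i hi, Finset.mul_sum]
        exact Finset.sum_congr rfl fun p _ => by ring
    _ = ∑ p ∈ P, ∑ i ∈ s, lam p * (c i * G p i) := Finset.sum_comm
    _ = ∑ p ∈ P, lam p * ∑ i ∈ s, c i * G p i := by
        refine Finset.sum_congr rfl fun p _ => ?_
        rw [Finset.mul_sum]

/-- The threshold profiles rounding the positive side of `b`. -/
def Bv (k : ℤ) (b : ℤ → ℝ) (p : ℕ) (i : ℤ) : ℝ :=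
  if 1 ≤ i ∧ i ≤ k then (if k - (p : ℤ) < i then 1 / 2 else 0) else b i

/-- The convex weights. -/
def lamv (k : ℤ) (b : ℤ → ℝ) (p : ℕ) : ℝ :=
  if p = 0 then 1 - 2 * b k else 2 * (b (k - (p : ℤ) + 1) - b (k - (p : ℤ)))

section Step

variable {k : ℤ} {b : ℤ → ℝ}

lemma Bv_out (p : ℕ) {i : ℤ} (hi : ¬(1 ≤ i ∧ i ≤ k)) : Bv k b p i = b i := by
  simp [Bv, hi]

lemma lam_sum_one (hk : 1 ≤ k) (hzero : b 0 = 0) :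
    ∑ p ∈ Finset.range (k.toNat + 1), lamv k b p = 1 := by
  have hmk : (k.toNat : ℤ) = k := Int.toNat_of_nonneg (by omega)
  rw [Finset.sum_range_succ']
  have h2 : ∑ p ∈ Finset.range k.toNat, lamv k b (p + 1)
      = 2 * b (k - ((0 : ℕ) : ℤ)) - 2 * b (k - (k.toNat : ℤ)) := by
    rw [← Finset.sum_range_sub' (fun p : ℕ => 2 * b (k - (p : ℤ))) k.toNat]
    refine Finset.sum_congr rfl fun p _ => ?_
    have ec : (((p + 1 : ℕ)) : ℤ) = (p : ℤ) + 1 := by push_cast; ring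
    simp only [lamv, Nat.succ_ne_zero, if_false, ec]
    have e1 : k - ((p : ℤ) + 1) + 1 = k - (p : ℤ) := by ring
    rw [e1]
    ring
  have h3 : lamv k b 0 = 1 - 2 * b k := rfl
  have hc0 : (((0:ℕ)):ℤ) = 0 := rfl
  rw [h2, h3, hc0, hmk, sub_zero, sub_self, hzero]
  ring

lemma lam_nonneg (hk : 1 ≤ k)
    (hmono : ∀ i j : ℤ, -k ≤ i → i ≤ j → j ≤ k → b i ≤ b j)
    (hbk : b k ≤ 1 / 2) :
    ∀ p ∈ Finset.range (k.toNat + 1), 0 ≤ lamv k b p := by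
  intro p hp
  rw [Finset.mem_range] at hp
  cases p with
  | zero =>
      have h3 : lamv k b 0 = 1 - 2 * b k := rfl
      rw [h3]; linarith
  | succ q =>
      have hq : (q : ℤ) + 1 ≤ k := by omega
      simp only [lamv, Nat.succ_ne_zero, if_false]
      have ec : (((q + 1 : ℕ)) : ℤ) = (q : ℤ) + 1 := by push_cast; ring
      rw [ec]
      have := hmono (k - ((q : ℤ) + 1)) (k - ((q : ℤ) + 1) + 1)
        (by omega) (by omega) (by omega)
      linarith

lemma abs_decomp (hk : 1 ≤ k)
    (hmono : ∀ i j : ℤ, -k ≤ i → i ≤ j → j ≤ k → b i ≤ b j)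
    (hzero : b 0 = 0) :
    ∀ i : ℤ, -k ≤ i → i ≤ k →
      |b i| = ∑ p ∈ Finset.range (k.toNat + 1), lamv k b p * |Bv k b p i| := by
  intro i hil hir
  have hmk : (k.toNat : ℤ) = k := Int.toNat_of_nonneg (by omega)
  by_cases hi : 1 ≤ i ∧ i ≤ k
  · -- positive side: telescoping
    have hbnn : 0 ≤ b i := by
      have h := hmono 0 i (by omega) (by omega) hir
      rw [hzero] at h; exact h
    rw [Finset.sum_range_succ']
    have hB0 : Bv k b 0 i = 0 := by
      simp only [Bv, if_pos hi, Int.ofNat_zero, sub_zero]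
      rw [if_neg (by omega)]
    have h2 : ∑ p ∈ Finset.range k.toNat, lamv k b (p + 1) * |Bv k b (p + 1) i|
        = b (min (k - ((0 : ℕ) : ℤ)) i) - b (min (k - (k.toNat : ℤ)) i) := by
      rw [← Finset.sum_range_sub' (fun p : ℕ => b (min (k - (p : ℤ)) i)) k.toNat]
      refine Finset.sum_congr rfl fun p _ => ?_
      have ec : (((p + 1 : ℕ)) : ℤ) = (p : ℤ) + 1 := by push_cast; ring
      simp only [lamv, Nat.succ_ne_zero, if_false, Bv, if_pos hi, ec]
      have e1 : k - ((p : ℤ) + 1) + 1 = k - (p : ℤ) := by ring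
      rw [e1]
      by_cases hc : k - (p : ℤ) ≤ i
      · rw [if_pos (by omega), min_eq_left hc, min_eq_left (by omega)]
        rw [abs_of_nonneg (by norm_num)]
        ring
      · rw [if_neg (by omega), min_eq_right (by omega), min_eq_right (by omega)]
        simp
    have hc0 : (((0:ℕ)):ℤ) = 0 := rfl
    rw [h2, hB0, hmk, sub_self, hc0, sub_zero]
    rw [min_eq_right hir]
    rw [min_eq_left (by omega : (0:ℤ) ≤ i), hzero]
    rw [abs_of_nonneg hbnn]
    simp
  · -- untouched side
    have hBv : ∀ p : ℕ, Bv k b p i = b i := fun p => Bv_out p hi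
    calc |b i| = (∑ p ∈ Finset.range (k.toNat + 1), lamv k b p) * |b i| := by
          rw [lam_sum_one hk hzero, one_mul]
      _ = ∑ p ∈ Finset.range (k.toNat + 1), lamv k b p * |Bv k b p i| := by
          rw [Finset.sum_mul]
          exact Finset.sum_congr rfl fun p _ => by rw [hBv p]

lemma Phi_decomp (hk : 1 ≤ k)
    (hmono : ∀ i j : ℤ, -k ≤ i → i ≤ j → j ≤ k → b i ≤ b j)
    (hzero : b 0 = 0) :
    Phi k b = ∑ p ∈ Finset.range (k.toNat + 1), lamv k b p * Phi k (Bv k b p) := by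
  have hA := abs_decomp hk hmono hzero
  set P := Finset.range (k.toNat + 1) with hP
  -- the four pieces
  have E1 : ∑ i ∈ Finset.Icc (-k) k, (4 * |(i : ℝ)| / (2 * (k : ℝ) + 1)) * |b i|
      = ∑ p ∈ P, lamv k b p *
          ∑ i ∈ Finset.Icc (-k) k, (4 * |(i : ℝ)| / (2 * (k : ℝ) + 1)) * |Bv k b p i| := by
    refine sum_decomp (lamv k b) _ _ _ _ fun i hi => ?_
    rw [Finset.mem_Icc] at hi
    exact hA i hi.1 hi.2
  have E2 : ∑ j ∈ Finset.Icc (-k) k, |b j|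
      = ∑ p ∈ P, lamv k b p * ∑ j ∈ Finset.Icc (-k) k, |Bv k b p j| := by
    have := sum_decomp (P := P) (lamv k b) (Finset.Icc (-k) k) (fun _ => 1)
      (fun j => |b j|) (fun p j => |Bv k b p j|) (fun i hi => by
        rw [Finset.mem_Icc] at hi; exact hA i hi.1 hi.2)
    simpa only [one_mul] using this
  have E3 : ∑ j ∈ Finset.Icc 1 k,
        |b j| * (2 * (k : ℝ) + 1 - 2 * (j : ℝ)) * (|b (j - k - 1)| - |b (j - k)|)
      = ∑ p ∈ P, lamv k b p * ∑ j ∈ Finset.Icc 1 k,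
          |Bv k b p j| * (2 * (k : ℝ) + 1 - 2 * (j : ℝ)) *
            (|Bv k b p (j - k - 1)| - |Bv k b p (j - k)|) := by
    have hmain := sum_decomp (P := P) (lamv k b) (Finset.Icc 1 k)
      (fun j : ℤ => (2 * (k : ℝ) + 1 - 2 * (j : ℝ)) * (|b (j - k - 1)| - |b (j - k)|))
      (fun j => |b j|) (fun p j => |Bv k b p j|) (fun j hj => by
        rw [Finset.mem_Icc] at hj; exact hA j (by omega) hj.2)
    calc ∑ j ∈ Finset.Icc 1 k,
          |b j| * (2 * (k : ℝ) + 1 - 2 * (j : ℝ)) * (|b (j - k - 1)| - |b (j - k)|)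
        = ∑ j ∈ Finset.Icc 1 k,
            (fun j : ℤ => (2 * (k : ℝ) + 1 - 2 * (j : ℝ)) * (|b (j - k - 1)| - |b (j - k)|)) j
              * |b j| := by
          exact Finset.sum_congr rfl fun j _ => by ring
      _ = ∑ p ∈ P, lamv k b p * ∑ j ∈ Finset.Icc 1 k,
            (fun j : ℤ => (2 * (k : ℝ) + 1 - 2 * (j : ℝ)) * (|b (j - k - 1)| - |b (j - k)|)) j
              * |Bv k b p j| := hmain
      _ = _ := by
          refine Finset.sum_congr rfl fun p _ => ?_
          congr 1
          refine Finset.sum_congr rfl fun j hj => ?_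
          rw [Finset.mem_Icc] at hj
          have h1 : Bv k b p (j - k - 1) = b (j - k - 1) := Bv_out p (by omega)
          have h2 : Bv k b p (j - k) = b (j - k) := Bv_out p (by omega)
          simp only []
          rw [h1, h2]
          ring
  have E4 : ∑ j ∈ Finset.Icc (-k) (-1),
        |b j| * (2 * (k : ℝ) + 1 + 2 * (j : ℝ)) * (|b (j + k + 1)| - |b (j + k)|)
      = ∑ p ∈ P, lamv k b p * ∑ j ∈ Finset.Icc (-k) (-1),
          |Bv k b p j| * (2 * (k : ℝ) + 1 + 2 * (j : ℝ)) *
            (|Bv k b p (j + k + 1)| - |Bv k b p (j + k)|) := by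
    have hmain := sum_decomp (P := P) (lamv k b) (Finset.Icc (-k) (-1))
      (fun j : ℤ => |b j| * (2 * (k : ℝ) + 1 + 2 * (j : ℝ)))
      (fun j => |b (j + k + 1)| - |b (j + k)|)
      (fun p j => |Bv k b p (j + k + 1)| - |Bv k b p (j + k)|) (fun j hj => by
        rw [Finset.mem_Icc] at hj
        show |b (j + k + 1)| - |b (j + k)| = ∑ p ∈ P, lamv k b p *
          (|Bv k b p (j + k + 1)| - |Bv k b p (j + k)|)
        rw [hA (j + k + 1) (by omega) (by omega), hA (j + k) (by omega) (by omega),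
          ← Finset.sum_sub_distrib]
        exact Finset.sum_congr rfl fun p _ => by ring)
    calc ∑ j ∈ Finset.Icc (-k) (-1),
          |b j| * (2 * (k : ℝ) + 1 + 2 * (j : ℝ)) * (|b (j + k + 1)| - |b (j + k)|)
        = ∑ j ∈ Finset.Icc (-k) (-1),
            (fun j : ℤ => |b j| * (2 * (k : ℝ) + 1 + 2 * (j : ℝ))) j *
              (|b (j + k + 1)| - |b (j + k)|) := by
          exact Finset.sum_congr rfl fun j _ => by ring
      _ = ∑ p ∈ P, lamv k b p * ∑ j ∈ Finset.Icc (-k) (-1),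
            (fun j : ℤ => |b j| * (2 * (k : ℝ) + 1 + 2 * (j : ℝ))) j *
              (|Bv k b p (j + k + 1)| - |Bv k b p (j + k)|) := hmain
      _ = _ := by
          refine Finset.sum_congr rfl fun p _ => ?_
          congr 1
          refine Finset.sum_congr rfl fun j hj => ?_
          rw [Finset.mem_Icc] at hj
          have h1 : Bv k b p j = b j := Bv_out p (by omega)
          simp only []
          rw [h1]
  have hsplit : ∑ p ∈ P, lamv k b p * Phi k (Bv k b p)
      = (∑ p ∈ P, lamv k b p *
          ∑ i ∈ Finset.Icc (-k) k, (4 * |(i : ℝ)| / (2 * (k : ℝ) + 1)) * |Bv k b p i|)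
      + (∑ p ∈ P, lamv k b p * ∑ j ∈ Finset.Icc (-k) k, |Bv k b p j|)
      + (∑ p ∈ P, lamv k b p * ∑ j ∈ Finset.Icc 1 k,
          |Bv k b p j| * (2 * (k : ℝ) + 1 - 2 * (j : ℝ)) *
            (|Bv k b p (j - k - 1)| - |Bv k b p (j - k)|))
      + (∑ p ∈ P, lamv k b p * ∑ j ∈ Finset.Icc (-k) (-1),
          |Bv k b p j| * (2 * (k : ℝ) + 1 + 2 * (j : ℝ)) *
            (|Bv k b p (j + k + 1)| - |Bv k b p (j + k)|)) := by
    rw [← Finset.sum_add_distrib, ← Finset.sum_add_distrib, ← Finset.sum_add_distrib]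
    refine Finset.sum_congr rfl fun p _ => ?_
    simp only [Phi]
    ring
  rw [hsplit]
  simp only [Phi]
  rw [E1, E2, E3, E4]

lemma Dd_decomp (hk : 1 ≤ k)
    (hmono : ∀ i j : ℤ, -k ≤ i → i ≤ j → j ≤ k → b i ≤ b j)
    (hzero : b 0 = 0) :
    Dd k b = ∑ p ∈ Finset.range (k.toNat + 1), lamv k b p * Dd k (Bv k b p) := by
  have hA := abs_decomp hk hmono hzero
  have hmain := sum_decomp (P := Finset.range (k.toNat + 1)) (lamv k b)
    (Finset.Icc (-k) k) (fun _ => 1) (fun j => |b j|) (fun p j => |Bv k b p j|)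
    (fun i hi => by rw [Finset.mem_Icc] at hi; exact hA i hi.1 hi.2)
  simp only [one_mul] at hmain
  simp only [Dd]
  rw [hmain, Finset.mul_sum]
  exact Finset.sum_congr rfl fun p _ => by ring

lemma step_pos (hk : 1 ≤ k) (hb : IsAdmissible k b) :
    ∃ b' : ℤ → ℝ, IsAdmissible k b' ∧
      (∀ i : ℤ, 1 ≤ i → i ≤ k → b' i = 0 ∨ b' i = 1 / 2) ∧
      (∀ i : ℤ, ¬(1 ≤ i ∧ i ≤ k) → b' i = b i) ∧
      phi k b ≤ phi k b' := by
  obtain ⟨⟨hmono, hrange, hzero⟩, i0, h0l, h0r, h0⟩ := hb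
  have hbk : b k ≤ 1 / 2 := (hrange k (by omega) le_rfl).2
  set P := Finset.range (k.toNat + 1) with hP
  have hPhiD := Phi_decomp (k := k) (b := b) hk hmono hzero
  have hDdD := Dd_decomp (k := k) (b := b) hk hmono hzero
  have hDpos : 0 < Dd k b := by
    have h1 : 0 < ∑ i ∈ Finset.Icc (-k) k, |b i| :=
      Finset.sum_pos' (fun i _ => abs_nonneg _)
        ⟨i0, Finset.mem_Icc.mpr ⟨h0l, h0r⟩, abs_pos.mpr h0⟩
    simp only [Dd]; linarith
  have hDnn : ∀ p ∈ P, 0 ≤ Dd k (Bv k b p) := by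
    intro p _
    simp only [Dd]
    have : 0 ≤ ∑ i ∈ Finset.Icc (-k) k, |Bv k b p i| :=
      Finset.sum_nonneg fun i _ => abs_nonneg _
    linarith
  have hz : ∀ p ∈ P, Dd k (Bv k b p) = 0 → Phi k (Bv k b p) ≤ 0 := by
    intro p _ hD0
    have hsum0 : ∑ i ∈ Finset.Icc (-k) k, |Bv k b p i| = 0 := by
      simp only [Dd] at hD0; linarith
    have hall := (Finset.sum_eq_zero_iff_of_nonneg
      (fun i (_ : i ∈ Finset.Icc (-k) k) => abs_nonneg (Bv k b p i))).mp hsum0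
    have t1 : ∑ i ∈ Finset.Icc (-k) k,
        (4 * |(i : ℝ)| / (2 * (k : ℝ) + 1)) * |Bv k b p i| = 0 :=
      Finset.sum_eq_zero fun i hi => by rw [hall i hi, mul_zero]
    have t2 : ∑ j ∈ Finset.Icc (-k) k, |Bv k b p j| = 0 := hsum0
    have t3 : ∑ j ∈ Finset.Icc 1 k,
        |Bv k b p j| * (2 * (k : ℝ) + 1 - 2 * (j : ℝ)) *
          (|Bv k b p (j - k - 1)| - |Bv k b p (j - k)|) = 0 :=
      Finset.sum_eq_zero fun j hj => by
        rw [Finset.mem_Icc] at hj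
        rw [hall j (Finset.mem_Icc.mpr ⟨by omega, hj.2⟩), zero_mul, zero_mul]
    have t4 : ∑ j ∈ Finset.Icc (-k) (-1),
        |Bv k b p j| * (2 * (k : ℝ) + 1 + 2 * (j : ℝ)) *
          (|Bv k b p (j + k + 1)| - |Bv k b p (j + k)|) = 0 :=
      Finset.sum_eq_zero fun j hj => by
        rw [Finset.mem_Icc] at hj
        rw [hall j (Finset.mem_Icc.mpr ⟨hj.1, by omega⟩), zero_mul, zero_mul]
    simp only [Phi]
    rw [t1, t2, t3, t4]
    norm_num
  obtain ⟨p, hpP, hDp, hle⟩ := mediant_lemma P (lamv k b)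
    (fun p => Phi k (Bv k b p)) (fun p => Dd k (Bv k b p))
    (lam_nonneg hk hmono hbk) hDnn hz (by rw [← hDdD]; exact hDpos)
  refine ⟨Bv k b p, ⟨⟨?_, ?_, ?_⟩, ?_⟩, ?_, ?_, ?_⟩
  · -- monotone
    intro i j h1 h2 h3
    by_cases ci : 1 ≤ i ∧ i ≤ k
    · have cj : 1 ≤ j ∧ j ≤ k := ⟨by omega, h3⟩
      simp only [Bv, if_pos ci, if_pos cj]
      by_cases hd : k - (p : ℤ) < i
      · rw [if_pos hd, if_pos (by omega)]
      · rw [if_neg hd]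
        split_ifs <;> norm_num
    · rw [Bv_out p ci]
      have hi0 : i ≤ 0 := by omega
      have hbi : b i ≤ 0 := by
        have := hmono i 0 h1 hi0 (by omega)
        rw [hzero] at this; exact this
      by_cases cj : 1 ≤ j ∧ j ≤ k
      · simp only [Bv, if_pos cj]
        split_ifs <;> linarith
      · rw [Bv_out p cj]
        exact hmono i j h1 h2 h3
  · -- range
    intro i h1 h2
    by_cases ci : 1 ≤ i ∧ i ≤ k
    · simp only [Bv, if_pos ci, Set.mem_Icc]
      split_ifs <;> norm_num
    · rw [Bv_out p ci]
      exact hrange i h1 h2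
  · -- zero
    have : ¬((1 : ℤ) ≤ 0 ∧ (0 : ℤ) ≤ k) := by omega
    rw [Bv_out p this, hzero]
  · -- nonzero witness
    have h1 : 0 < ∑ i ∈ Finset.Icc (-k) k, |Bv k b p i| := by
      simp only [Dd] at hDp; linarith
    have h2 : ∑ i ∈ Finset.Icc (-k) k, (0 : ℝ) < ∑ i ∈ Finset.Icc (-k) k, |Bv k b p i| := by
      simpa using h1
    obtain ⟨i, hi, hlt⟩ := Finset.exists_lt_of_sum_lt h2
    rw [Finset.mem_Icc] at hi
    exact ⟨i, hi.1, hi.2, fun hcon => by rw [hcon] at hlt; simp at hlt⟩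
  · -- boundary on positive side
    intro i h1 h2
    simp only [Bv, if_pos (⟨h1, h2⟩ : 1 ≤ i ∧ i ≤ k)]
    split_ifs with h
    · right; rfl
    · left; rfl
  · exact fun i hi => Bv_out p hi
  · -- the inequality
    simp only [phi]
    rw [hPhiD, hDdD]
    exact hle

end Step

/-! ### Reflection symmetry -/

/-- The reflected profile. -/
def negRev (b : ℤ → ℝ) : ℤ → ℝ := fun i => -b (-i)

lemma negRev_adm {k : ℤ} {b : ℤ → ℝ} (hb : IsAdmissible k b) :
    IsAdmissible k (negRev b) := by
  obtain ⟨⟨hmono, hrange, hzero⟩, i0, h1, h2, h3⟩ := hb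
  refine ⟨⟨?_, ?_, ?_⟩, -i0, by omega, by omega, ?_⟩
  · intro i j hi hij hj
    simp only [negRev]
    have := hmono (-j) (-i) (by omega) (by omega) (by omega)
    linarith
  · intro i hi hj
    have := hrange (-i) (by omega) (by omega)
    simp only [Set.mem_Icc] at this ⊢
    simp only [negRev]
    constructor <;> linarith [this.1, this.2]
  · simp only [negRev, neg_zero, hzero]
  · simp only [negRev, neg_neg, ne_eq, neg_eq_zero]
    exact h3

lemma Phi_negRev (k : ℤ) (b : ℤ → ℝ) : Phi k (negRev b) = Phi k b := by
  have hs : ∀ i : ℤ, i ∈ Finset.Icc (-k) k ↔ (Equiv.neg ℤ) i ∈ Finset.Icc (-k) k := by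
    intro i; simp only [Equiv.neg_apply, Finset.mem_Icc]; omega
  have e1 : ∑ i ∈ Finset.Icc (-k) k, (4 * |(i : ℝ)| / (2 * (k : ℝ) + 1)) * |negRev b i|
      = ∑ i ∈ Finset.Icc (-k) k, (4 * |(i : ℝ)| / (2 * (k : ℝ) + 1)) * |b i| := by
    refine Finset.sum_equiv (Equiv.neg ℤ) hs fun i _ => ?_
    simp only [Equiv.neg_apply, negRev, abs_neg, Int.cast_neg]
  have e2 : ∑ j ∈ Finset.Icc (-k) k, |negRev b j| = ∑ j ∈ Finset.Icc (-k) k, |b j| := by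
    refine Finset.sum_equiv (Equiv.neg ℤ) hs fun i _ => ?_
    simp only [Equiv.neg_apply, negRev, abs_neg]
  have hs34 : ∀ j : ℤ, j ∈ Finset.Icc 1 k ↔ (Equiv.neg ℤ) j ∈ Finset.Icc (-k) (-1) := by
    intro j; simp only [Equiv.neg_apply, Finset.mem_Icc]; omega
  have e3 : ∑ j ∈ Finset.Icc 1 k,
        |negRev b j| * (2 * (k : ℝ) + 1 - 2 * (j : ℝ)) *
          (|negRev b (j - k - 1)| - |negRev b (j - k)|)
      = ∑ j ∈ Finset.Icc (-k) (-1),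
          |b j| * (2 * (k : ℝ) + 1 + 2 * (j : ℝ)) * (|b (j + k + 1)| - |b (j + k)|) := by
    refine Finset.sum_equiv (Equiv.neg ℤ) hs34 fun j _ => ?_
    simp only [Equiv.neg_apply, negRev, abs_neg, Int.cast_neg]
    rw [show (-j + k + 1 : ℤ) = -(j - k - 1) by ring, show (-j + k : ℤ) = -(j - k) by ring]
    ring
  have hs43 : ∀ j : ℤ, j ∈ Finset.Icc (-k) (-1) ↔ (Equiv.neg ℤ) j ∈ Finset.Icc 1 k := by
    intro j; simp only [Equiv.neg_apply, Finset.mem_Icc]; omega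
  have e4 : ∑ j ∈ Finset.Icc (-k) (-1),
        |negRev b j| * (2 * (k : ℝ) + 1 + 2 * (j : ℝ)) *
          (|negRev b (j + k + 1)| - |negRev b (j + k)|)
      = ∑ j ∈ Finset.Icc 1 k,
          |b j| * (2 * (k : ℝ) + 1 - 2 * (j : ℝ)) * (|b (j - k - 1)| - |b (j - k)|) := by
    refine Finset.sum_equiv (Equiv.neg ℤ) hs43 fun j _ => ?_
    simp only [Equiv.neg_apply, negRev, abs_neg, Int.cast_neg]
    rw [show (-j - k - 1 : ℤ) = -(j + k + 1) by ring, show (-j - k : ℤ) = -(j + k) by ring]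
    ring
  simp only [Phi]
  rw [e1, e2, e3, e4]
  ring

lemma Dd_negRev (k : ℤ) (b : ℤ → ℝ) : Dd k (negRev b) = Dd k b := by
  have hs : ∀ i : ℤ, i ∈ Finset.Icc (-k) k ↔ (Equiv.neg ℤ) i ∈ Finset.Icc (-k) k := by
    intro i; simp only [Equiv.neg_apply, Finset.mem_Icc]; omega
  simp only [Dd]
  congr 1
  refine Finset.sum_equiv (Equiv.neg ℤ) hs fun i _ => ?_
  simp only [Equiv.neg_apply, negRev, abs_neg]

lemma phi_negRev (k : ℤ) (b : ℤ → ℝ) : phi k (negRev b) = phi k b := by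
  simp only [phi, Phi_negRev, Dd_negRev]

/-- For every admissible profile there is an admissible boundary profile (with all reports in
`{-1/2, 0, 1/2}`) with at least as large a value of `φ`. -/
theorem exists_boundary_ge (k : ℤ) (hk : 1 ≤ k) (b : ℤ → ℝ) (hb : IsAdmissible k b) :
    ∃ bs : ℤ → ℝ, IsAdmissible k bs ∧
      (∀ i : ℤ, -k ≤ i → i ≤ k → bs i = -(1 / 2) ∨ bs i = 0 ∨ bs i = 1 / 2) ∧
      phi k b ≤ phi k bs := by
  obtain ⟨b₁, hb₁adm, hb₁pos, hb₁else, hle₁⟩ := step_pos hk hb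
  obtain ⟨b₂, hb₂adm, hb₂pos, hb₂else, hle₂⟩ := step_pos hk (negRev_adm hb₁adm)
  refine ⟨b₂, hb₂adm, ?_, ?_⟩
  · intro i hi1 hi2
    by_cases hpos : 1 ≤ i
    · rcases hb₂pos i hpos hi2 with h | h
      · right; left; exact h
      · right; right; exact h
    · have hi0 : i ≤ 0 := by omega
      have h1 : b₂ i = negRev b₁ i := hb₂else i (by omega)
      by_cases hi00 : i = 0
      · subst hi00
        right; left
        rw [h1]
        simp only [negRev, neg_zero]
        rw [hb₁adm.1.2.2]
        simp
      · have hin : 1 ≤ -i := by omega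
        rcases hb₁pos (-i) hin (by omega) with h | h
        · right; left
          rw [h1]; simp only [negRev]; rw [h]; simp
        · left
          rw [h1]; simp only [negRev]; rw [h]
  · calc phi k b ≤ phi k b₁ := hle₁
      _ = phi k (negRev b₁) := (phi_negRev k b₁).symm
      _ ≤ phi k b₂ := hle₂

end
end

section
/- For every admissible boundary profile b (one with b i ∈ {−1/2, 0, 1/2} for all i ∈ {−k,…,k}), φ(b) ≤ 7/4; equivalently Φ(b) ≤ (7/4) · D(b). -/
open Finset

noncomputable section

lemma sum_Ioc_split (f : ℤ → ℝ) {a b c : ℤ} (h1 : a ≤ b) (h2 : b ≤ c) :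
    ∑ i ∈ Ioc a c, f i = (∑ i ∈ Ioc a b, f i) + ∑ i ∈ Ioc b c, f i := by
  rw [← Finset.Ioc_union_Ioc_eq_Ioc h1 h2, Finset.sum_union]
  rw [Finset.disjoint_left]
  intro x hx hx'
  rw [Finset.mem_Ioc] at hx hx'
  omega

lemma sum_Ioc_const (f : ℤ → ℝ) (c : ℝ) {a b : ℤ} (h : a ≤ b)
    (hf : ∀ i, a < i → i ≤ b → f i = c) :
    ∑ i ∈ Ioc a b, f i = ((b - a : ℤ) : ℝ) * c := by
  have e : ∑ i ∈ Ioc a b, f i = ∑ _i ∈ Ioc a b, c :=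
    Finset.sum_congr rfl (fun i hi => by
      rw [Finset.mem_Ioc] at hi; exact hf i hi.1 hi.2)
  rw [e, Finset.sum_const, Int.card_Ioc, nsmul_eq_mul]
  congr 1
  exact_mod_cast Int.toNat_of_nonneg (by omega : (0:ℤ) ≤ b - a)

lemma sum_Ioc_id (a b : ℤ) (h : a ≤ b) :
    ∑ i ∈ Ioc a b, (i : ℝ) = ((b * (b + 1) - a * (a + 1) : ℤ) : ℝ) / 2 := by
  refine Int.le_induction (motive := fun b _ => ∑ i ∈ Ioc a b, (i : ℝ) =
      ((b * (b + 1) - a * (a + 1) : ℤ) : ℝ) / 2) ?_ ?_ b h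
  · simp
  · intro n hn ih
    have hins : Ioc a (n + 1) = insert (n + 1) (Ioc a n) := by
      ext x; simp only [Finset.mem_Ioc, Finset.mem_insert]; omega
    rw [hins, Finset.sum_insert (by rw [Finset.mem_Ioc]; omega), ih]
    push_cast
    ring

lemma sum_Ioc_lin (f : ℤ → ℝ) (c : ℝ) {a b : ℤ} (h : a ≤ b)
    (hf : ∀ i, a < i → i ≤ b → f i = c * i) :
    ∑ i ∈ Ioc a b, f i = c * (((b * (b + 1) - a * (a + 1) : ℤ) : ℝ) / 2) := by
  have e : ∑ i ∈ Ioc a b, f i = ∑ i ∈ Ioc a b, c * (i : ℝ) :=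
    Finset.sum_congr rfl (fun i hi => by
      rw [Finset.mem_Ioc] at hi; exact hf i hi.1 hi.2)
  rw [e, ← Finset.mul_sum, sum_Ioc_id a b h]

/-- Every admissible boundary profile satisfies `φ(b) ≤ 7/4`;
equivalently `Φ(b) ≤ (7/4) · D(b)`. -/
theorem phi_le_seven_quarters_of_boundary (k : ℤ) (hk : 1 ≤ k) (b : ℤ → ℝ)
    (hb : IsAdmissible k b)
    (hbd : ∀ i : ℤ, -k ≤ i → i ≤ k → b i = -(1 / 2) ∨ b i = 0 ∨ b i = 1 / 2) :
    phi k b ≤ 7 / 4 ∧ Phi k b ≤ (7 / 4) * Dd k b := by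
  obtain ⟨⟨hmono, _hrange, h0⟩, i0, hi0l, hi0r, hi0⟩ := hb
  have a1 : |(1/2 : ℝ)| = 1/2 := abs_of_nonneg (by norm_num)
  have a2 : |(-(1/2) : ℝ)| = 1/2 := by rw [abs_neg]; exact a1
  -- the least zero t on [-k,0]
  have hTne : ((Finset.Icc (-k) 0).filter (fun i => b i = 0)).Nonempty :=
    ⟨0, by simp only [Finset.mem_filter, Finset.mem_Icc]; exact ⟨⟨by omega, le_refl 0⟩, h0⟩⟩
  set t := ((Finset.Icc (-k) 0).filter (fun i => b i = 0)).min' hTne with htdef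
  have htmem := Finset.min'_mem _ hTne
  rw [Finset.mem_filter, Finset.mem_Icc] at htmem
  obtain ⟨⟨htl, htr⟩, hbt⟩ := htmem
  have htmin : ∀ i, -k ≤ i → i ≤ 0 → b i = 0 → t ≤ i := by
    intro i h1 h2 h3
    exact Finset.min'_le _ i (by rw [Finset.mem_filter, Finset.mem_Icc]; exact ⟨⟨h1, h2⟩, h3⟩)
  -- the greatest zero u on [0,k]
  have hUne : ((Finset.Icc 0 k).filter (fun i => b i = 0)).Nonempty :=
    ⟨0, by simp only [Finset.mem_filter, Finset.mem_Icc]; exact ⟨⟨le_refl 0, by omega⟩, h0⟩⟩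
  set u := ((Finset.Icc 0 k).filter (fun i => b i = 0)).max' hUne with hudef
  have humem := Finset.max'_mem _ hUne
  rw [Finset.mem_filter, Finset.mem_Icc] at humem
  obtain ⟨⟨hul, hur⟩, hbu⟩ := humem
  have humax : ∀ i, 0 ≤ i → i ≤ k → b i = 0 → i ≤ u := by
    intro i h1 h2 h3
    exact Finset.le_max' _ i (by rw [Finset.mem_filter, Finset.mem_Icc]; exact ⟨⟨h1, h2⟩, h3⟩)
  clear_value t u
  rw [← htdef] at hbt htl htr
  rw [← hudef] at hbu hul hur
  -- structure of b
  have hneg : ∀ i, -k ≤ i → i < t → b i = -(1/2) := by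
    intro i h1 h2
    rcases hbd i h1 (by omega) with h | h | h
    · exact h
    · exact absurd (htmin i h1 (by omega) h) (by omega)
    · have := hmono i 0 h1 (by omega) (by omega)
      rw [h0, h] at this; norm_num at this
  have hzt : ∀ i, t ≤ i → i ≤ 0 → b i = 0 := by
    intro i h1 h2
    have hb1 := hmono t i htl h1 (by omega)
    have hb2 := hmono i 0 (by omega) h2 (by omega)
    rw [hbt] at hb1; rw [h0] at hb2; linarith
  have hpos : ∀ i, u < i → i ≤ k → b i = 1/2 := by
    intro i h1 h2
    rcases hbd i (by omega) h2 with h | h | h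
    · have := hmono 0 i (by omega) (by omega) h2
      rw [h0, h] at this; norm_num at this
    · exact absurd (humax i (by omega) h2 h) (by omega)
    · exact h
  have hzu : ∀ i, 0 ≤ i → i ≤ u → b i = 0 := by
    intro i h1 h2
    have hb1 := hmono 0 i (by omega) h1 (by omega)
    have hb2 := hmono i u (by omega) h2 hur
    rw [h0] at hb1; rw [hbu] at hb2; linarith
  -- interval rewriting
  have hIcc : Finset.Icc (-k) k = Finset.Ioc (-k-1) k := by
    ext x; simp only [Finset.mem_Icc, Finset.mem_Ioc]; omega
  have hA : (-k-1 : ℤ) ≤ t-1 := by omega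
  have hB : (t-1 : ℤ) ≤ k := by omega
  have hC : (t-1 : ℤ) ≤ u := by omega
  have hD : (u : ℤ) ≤ k := hur
  -- the three pieces for |b|
  have hbot : ∀ i : ℤ, -k-1 < i → i ≤ t-1 → |b i| = 1/2 := by
    intro i h1 h2; rw [hneg i (by omega) (by omega), a2]
  have hmid : ∀ i : ℤ, t-1 < i → i ≤ u → |b i| = 0 := by
    intro i h1 h2
    rcases le_or_gt i 0 with h | h
    · rw [hzt i (by omega) h, abs_zero]
    · rw [hzu i (by omega) h2, abs_zero]
  have htop : ∀ i : ℤ, u < i → i ≤ k → |b i| = 1/2 := by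
    intro i h1 h2; rw [hpos i h1 h2, a1]
  -- closed form for Σ |b i|
  have hsum0 : ∑ j ∈ Finset.Icc (-k) k, |b j| =
      ((t : ℝ) + (k : ℝ)) / 2 + ((k : ℝ) - (u : ℝ)) / 2 := by
    rw [hIcc, sum_Ioc_split _ hA hB, sum_Ioc_split _ hC hD,
      sum_Ioc_const _ (1/2) hA hbot, sum_Ioc_const _ 0 hC hmid,
      sum_Ioc_const _ (1/2) hD htop]
    push_cast
    ring
  -- closed form for the weighted sum
  have hsum1 : ∑ i ∈ Finset.Icc (-k) k, (4 * |(i : ℝ)| / (2 * (k : ℝ) + 1)) * |b i| =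
      (-2/(2*(k:ℝ)+1)) * ((((t-1) * t - (-k-1) * (-k) : ℤ) : ℝ) / 2) +
      (2/(2*(k:ℝ)+1)) * (((k * (k+1) - u * (u+1) : ℤ) : ℝ) / 2) := by
    rw [hIcc, sum_Ioc_split _ hA hB, sum_Ioc_split _ hC hD,
      sum_Ioc_lin _ (-2/(2*(k:ℝ)+1)) hA (by
        intro i h1 h2
        have hi0' : (i : ℝ) ≤ 0 := by exact_mod_cast (by omega : i ≤ 0)
        rw [hbot i h1 h2, abs_of_nonpos hi0']
        ring),
      sum_Ioc_const _ 0 hC (by intro i h1 h2; rw [hmid i h1 h2, mul_zero]),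
      sum_Ioc_lin _ (2/(2*(k:ℝ)+1)) hD (by
        intro i h1 h2
        have hi0' : (0:ℝ) ≤ (i : ℝ) := by exact_mod_cast (by omega : 0 ≤ i)
        rw [htop i h1 h2, abs_of_nonneg hi0']
        ring)]
    push_cast
    ring
  -- denominator
  have hDd : Dd k b = ((t : ℝ) + (k : ℝ)) + ((k : ℝ) - (u : ℝ)) := by
    rw [Dd, hsum0]; ring
  -- positivity of the denominator
  have hs1 : 1 ≤ (t + k) + (k - u) := by
    by_contra hcon
    push_neg at hcon
    have ht' : t = -k := by omega
    have hu' : u = k := by omega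
    rcases le_or_gt i0 0 with h | h
    · exact hi0 (hzt i0 (by omega) h)
    · exact hi0 (hzu i0 (by omega) (by omega))
  have hDpos : 0 < Dd k b := by
    rw [hDd]
    have : (1 : ℝ) ≤ ((t : ℝ) + (k : ℝ)) + ((k : ℝ) - (u : ℝ)) := by exact_mod_cast hs1
    linarith
  have hn : (0:ℝ) < 2*(k:ℝ)+1 := by
    have : (1:ℝ) ≤ (k:ℝ) := by exact_mod_cast hk
    linarith
  -- S3 partial sum: only j = t+k can contribute
  have h3zero : ∀ j ∈ Finset.Icc 1 k, j ≠ t + k →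
      |b j| * (2 * (k : ℝ) + 1 - 2 * (j : ℝ)) * (|b (j - k - 1)| - |b (j - k)|) = 0 := by
    intro j hj hne
    rw [Finset.mem_Icc] at hj
    have hd : |b (j - k - 1)| - |b (j - k)| = 0 := by
      rcases lt_or_ge j (t + k) with h | h
      · rw [hneg (j-k-1) (by omega) (by omega), hneg (j-k) (by omega) (by omega)]; ring
      · rw [hzt (j-k-1) (by omega) (by omega), hzt (j-k) (by omega) (by omega)]; ring
    rw [hd, mul_zero]
  have h3not : (t + k) ∉ Finset.Icc 1 k →
      |b (t+k)| * (2 * (k : ℝ) + 1 - 2 * ((t+k : ℤ) : ℝ)) * (|b (t+k - k - 1)| - |b (t+k - k)|) = 0 := by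
    intro hmem
    rw [Finset.mem_Icc] at hmem
    have : t + k = 0 := by omega
    rw [this]
    simp [h0]
  -- S4 partial sum: only j = u - k can contribute
  have h4zero : ∀ j ∈ Finset.Icc (-k) (-1), j ≠ u - k →
      |b j| * (2 * (k : ℝ) + 1 + 2 * (j : ℝ)) * (|b (j + k + 1)| - |b (j + k)|) = 0 := by
    intro j hj hne
    rw [Finset.mem_Icc] at hj
    have hd : |b (j + k + 1)| - |b (j + k)| = 0 := by
      rcases lt_or_ge j (u - k) with h | h
      · rw [hzu (j+k+1) (by omega) (by omega), hzu (j+k) (by omega) (by omega)]; ring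
      · rw [hpos (j+k+1) (by omega) (by omega), hpos (j+k) (by omega) (by omega)]; ring
    rw [hd, mul_zero]
  have h4not : (u - k) ∉ Finset.Icc (-k) (-1) →
      |b (u-k)| * (2 * (k : ℝ) + 1 + 2 * ((u-k : ℤ) : ℝ)) * (|b (u-k + k + 1)| - |b (u-k + k)|) = 0 := by
    intro hmem
    rw [Finset.mem_Icc] at hmem
    have : u - k = 0 := by omega
    rw [this]
    simp [h0]
  have hsum3 := Finset.sum_eq_single (f := fun j : ℤ =>
      |b j| * (2 * (k : ℝ) + 1 - 2 * (j : ℝ)) * (|b (j - k - 1)| - |b (j - k)|))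
      (t + k) h3zero h3not
  have hsum4 := Finset.sum_eq_single (f := fun j : ℤ =>
      |b j| * (2 * (k : ℝ) + 1 + 2 * (j : ℝ)) * (|b (j + k + 1)| - |b (j + k)|))
      (u - k) h4zero h4not
  -- main bound on Phi
  have hmain : Phi k b ≤ (7 / 4) * Dd k b := by
    rcases lt_or_ge u (t + k) with hc | hc
    -- case M + P > k : both correction terms active
    · have hval3 : (fun j : ℤ =>
          |b j| * (2 * (k : ℝ) + 1 - 2 * (j : ℝ)) * (|b (j - k - 1)| - |b (j - k)|)) (t+k)
          = (1/2) * (2 * (k : ℝ) + 1 - 2 * ((t:ℝ) + (k:ℝ))) * (1/2) := by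
        simp only
        rw [show t + k - k - 1 = t - 1 by ring, show t + k - k = t by ring,
          hneg (t-1) (by omega) (by omega), hzt t le_rfl htr,
          hpos (t+k) hc (by omega), a1, a2, abs_zero]
        push_cast
        ring
      have hval4 : (fun j : ℤ =>
          |b j| * (2 * (k : ℝ) + 1 + 2 * (j : ℝ)) * (|b (j + k + 1)| - |b (j + k)|)) (u-k)
          = (1/2) * (2 * (k : ℝ) + 1 + 2 * ((u:ℝ) - (k:ℝ))) * (1/2) := by
        simp only
        rw [show u - k + k + 1 = u + 1 by ring, show u - k + k = u by ring,
          hneg (u-k) (by omega) (by omega), hzu u hul le_rfl,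
          hpos (u+1) (by omega) (by omega), a1, a2, abs_zero]
        push_cast
        ring
      simp only at hval3; rw [hval3] at hsum3
      simp only at hval4; rw [hval4] at hsum4
      have hne : (2*(k:ℝ)+1) ≠ 0 := ne_of_gt hn
      have hPhi : Phi k b =
          ((2*(k:ℝ)+1) * (((t:ℝ)+(k:ℝ)) + ((k:ℝ)-(u:ℝ))) - ((t:ℝ)+(k:ℝ))^2 - ((k:ℝ)-(u:ℝ))^2
            + (2*(k:ℝ)+1)^2/2) / (2*(k:ℝ)+1) := by
        rw [Phi, hsum1, hsum0, hsum3, hsum4]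
        push_cast
        field_simp
        ring
      rw [hPhi, hDd, div_le_iff₀ hn]
      clear hsum0 hsum1 hsum3 hsum4 h3zero h3not h4zero h4not hval3 hval4 hPhi hDd hDpos
      clear hbt hbu hTne hUne htdef hudef hIcc hbot hmid htop hneg hzt hpos hzu hmono _hrange hbd hi0
      have hcR : (u : ℝ) + 1 ≤ (t : ℝ) + (k : ℝ) := by exact_mod_cast (by omega : u + 1 ≤ t + k)
      have htR1 : -(k:ℝ) ≤ (t:ℝ) := by exact_mod_cast htl
      have htR2 : (t:ℝ) ≤ 0 := by exact_mod_cast htr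
      have huR1 : (0:ℝ) ≤ (u:ℝ) := by exact_mod_cast hul
      have huR2 : (u:ℝ) ≤ (k:ℝ) := by exact_mod_cast hur
      have hkR : (1:ℝ) ≤ (k:ℝ) := by exact_mod_cast hk
      nlinarith [sq_nonneg ((t:ℝ) + (u:ℝ)),
        sq_nonneg (2*((t:ℝ) - (u:ℝ) + 2*(k:ℝ)) - (2*(k:ℝ)+1)),
        mul_nonneg hn.le
          (by linarith : (0:ℝ) ≤ 2*((t:ℝ) - (u:ℝ) + 2*(k:ℝ)) - (2*(k:ℝ)+1) - 1)]
    -- case M + P ≤ k : correction terms vanish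
    · have hval3 : (fun j : ℤ =>
          |b j| * (2 * (k : ℝ) + 1 - 2 * (j : ℝ)) * (|b (j - k - 1)| - |b (j - k)|)) (t+k)
          = 0 := by
        simp only
        rw [hzu (t+k) (by omega) (by omega), abs_zero, zero_mul, zero_mul]
      have hval4 : (fun j : ℤ =>
          |b j| * (2 * (k : ℝ) + 1 + 2 * (j : ℝ)) * (|b (j + k + 1)| - |b (j + k)|)) (u-k)
          = 0 := by
        simp only
        rw [hzt (u-k) (by omega) (by omega), abs_zero, zero_mul, zero_mul]
      simp only at hval3; rw [hval3] at hsum3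
      simp only at hval4; rw [hval4] at hsum4
      have hne : (2*(k:ℝ)+1) ≠ 0 := ne_of_gt hn
      have hPhi : Phi k b =
          ((2*(k:ℝ)+1) * (((t:ℝ)+(k:ℝ)) + ((k:ℝ)-(u:ℝ))) - ((t:ℝ)+(k:ℝ))^2 - ((k:ℝ)-(u:ℝ))^2
            + (2*(k:ℝ)+1) * ((((t:ℝ)+(k:ℝ)) + ((k:ℝ)-(u:ℝ)))/2)) / (2*(k:ℝ)+1) := by
        rw [Phi, hsum1, hsum0, hsum3, hsum4]
        push_cast
        field_simp
        ring
      rw [hPhi, hDd, div_le_iff₀ hn]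
      clear hsum0 hsum1 hsum3 hsum4 h3zero h3not h4zero h4not hval3 hval4 hPhi hDd hDpos
      clear hbt hbu hTne hUne htdef hudef hIcc hbot hmid htop hneg hzt hpos hzu hmono _hrange hbd hi0
      have htR1 : -(k:ℝ) ≤ (t:ℝ) := by exact_mod_cast htl
      have htR2 : (t:ℝ) ≤ 0 := by exact_mod_cast htr
      have huR1 : (0:ℝ) ≤ (u:ℝ) := by exact_mod_cast hul
      have huR2 : (u:ℝ) ≤ (k:ℝ) := by exact_mod_cast hur
      have hkR : (1:ℝ) ≤ (k:ℝ) := by exact_mod_cast hk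
      nlinarith [sq_nonneg ((t:ℝ) + (k:ℝ)), sq_nonneg ((k:ℝ) - (u:ℝ)),
        mul_nonneg hn.le (by linarith : (0:ℝ) ≤ ((t:ℝ)+(k:ℝ)) + ((k:ℝ)-(u:ℝ)))]
  refine ⟨?_, hmain⟩
  rw [phi, div_le_iff₀ hDpos]
  linarith [hmain]

end
end

section
/- Let k ≥ 1 and m₋₁, m₁ ≥ 0 be integers with m₋₁ + m₁ + 1 ≤ k, and let b be the boundary profile determined by these parameters: b i = −1/2 for −k ≤ i < −m₋₁, b i = 0 for −m₋₁ ≤ i ≤ m₁, and b i = 1/2 for m₁ < i ≤ k. Then b is admissible and φ(b) = (8k² + 8k − 2m₁² − 2m₁ − 2m₋₁² − 2m₋₁ + 1) / (2·(2k+1)·(2k − m₁ − m₋₁)). -/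
open Finset

lemma mySplit (f : ℤ → ℝ) (a c b : ℤ) (h1 : a ≤ c + 1) (h2 : c ≤ b) :
    ∑ i ∈ Finset.Icc a b, f i
      = (∑ i ∈ Finset.Icc a c, f i) + ∑ i ∈ Finset.Icc (c+1) b, f i := by
  rw [← Finset.sum_union]
  · congr 1; ext x; simp only [Finset.mem_Icc, Finset.mem_union]; omega
  · simp only [Finset.disjoint_left, Finset.mem_Icc]; omega

lemma myConst (a b : ℤ) (c : ℝ) (h : a ≤ b + 1) :
    ∑ _i ∈ Finset.Icc a b, c = ((b : ℝ) + 1 - a) * c := by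
  rw [Finset.sum_const, Int.card_Icc, nsmul_eq_mul]
  congr 1
  have h2 : (0:ℤ) ≤ b + 1 - a := by omega
  exact_mod_cast congrArg (Int.cast : ℤ → ℝ) (Int.toNat_of_nonneg h2)

lemma myGauss (a b : ℤ) (hb : a - 1 ≤ b) :
    ∑ i ∈ Finset.Icc a b, (i : ℝ) = ((b : ℝ) - a + 1) * (a + b) / 2 := by
  refine Int.le_induction (m := a - 1)
    (motive := fun b _ => ∑ i ∈ Finset.Icc a b, (i : ℝ) = ((b : ℝ) - a + 1) * (a + b) / 2)
    ?_ ?_ b hb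
  · beta_reduce
    rw [Finset.Icc_eq_empty (by omega), Finset.sum_empty]; push_cast; ring
  · intro n hn ih
    rw [mySplit _ a n (n+1) (by omega) (by omega), ih, Finset.Icc_self,
      Finset.sum_singleton]
    push_cast; ring

noncomputable section

/-- Closed form of `φ` on the boundary profile determined by parameters `m₋₁` (here `mneg`)
and `m₁` (here `mpos`): `-1/2` for `i < -m₋₁`, `0` for `-m₋₁ ≤ i ≤ m₁`, `1/2` for `m₁ < i`. -/
theorem phi_boundary_closed_form (k mneg mpos : ℤ) (hk : 1 ≤ k)
    (hmneg : 0 ≤ mneg) (hmpos : 0 ≤ mpos) (hsum : mneg + mpos + 1 ≤ k) :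
    IsAdmissible k
      (fun i : ℤ => if i < -mneg then (-(1 / 2) : ℝ) else if i ≤ mpos then 0 else 1 / 2) ∧
    phi k (fun i : ℤ => if i < -mneg then (-(1 / 2) : ℝ) else if i ≤ mpos then 0 else 1 / 2) =
      (8 * (k : ℝ) ^ 2 + 8 * (k : ℝ) - 2 * (mpos : ℝ) ^ 2 - 2 * (mpos : ℝ) -
          2 * (mneg : ℝ) ^ 2 - 2 * (mneg : ℝ) + 1) /
        (2 * (2 * (k : ℝ) + 1) * (2 * (k : ℝ) - (mpos : ℝ) - (mneg : ℝ))) := by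
  set b : ℤ → ℝ :=
    (fun i : ℤ => if i < -mneg then (-(1 / 2) : ℝ) else if i ≤ mpos then 0 else 1 / 2)
    with hbdef
  have hbval : ∀ i : ℤ, b i = if i < -mneg then (-(1 / 2) : ℝ) else if i ≤ mpos then 0 else 1 / 2 :=
    fun i => rfl
  have habs : ∀ i : ℤ, |b i| = if -mneg ≤ i ∧ i ≤ mpos then (0:ℝ) else 1 / 2 := by
    intro i
    rw [hbval]
    split_ifs with h1 h2 h3 h4 <;> try omega
    · rw [abs_of_nonpos (by norm_num)]; norm_num
    · simp
    · rw [abs_of_nonneg (by norm_num)]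
  constructor
  · refine ⟨⟨?_, ?_, ?_⟩, k, by omega, le_refl k, ?_⟩
    · intro i j hi hij hj
      rw [hbval, hbval]
      split_ifs <;> first | (exfalso; omega) | norm_num
    · intro i _ _
      rw [hbval]
      split_ifs <;> constructor <;> norm_num
    · rw [hbval, if_neg (by omega), if_pos (by omega)]
    · rw [hbval, if_neg (by omega), if_neg (by omega)]; norm_num
  -- value computation
  have hS1 : (∑ i ∈ Finset.Icc (-k) k, (4 * |(i : ℝ)| / (2 * (k : ℝ) + 1)) * |b i|)
      = (2 * (k:ℝ) * ((k:ℝ) + 1) - (mneg:ℝ) * ((mneg:ℝ) + 1) - (mpos:ℝ) * ((mpos:ℝ) + 1))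
        / (2 * (k:ℝ) + 1) := by
    rw [mySplit _ (-k) (-mneg-1) k (by omega) (by omega),
        show (-mneg - 1 + 1 : ℤ) = -mneg by ring,
        mySplit _ (-mneg) mpos k (by omega) (by omega)]
    have e1 : ∑ i ∈ Finset.Icc (-k) (-mneg-1), (4 * |(i : ℝ)| / (2 * (k : ℝ) + 1)) * |b i|
        = ∑ i ∈ Finset.Icc (-k) (-mneg-1), (-2 / (2 * (k:ℝ) + 1)) * (i:ℝ) := by
      refine Finset.sum_congr rfl ?_
      intro i hi
      simp only [Finset.mem_Icc] at hi
      rw [habs, if_neg (by omega), abs_of_neg (by exact_mod_cast (show i < 0 by omega))]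
      ring
    have e2 : ∑ i ∈ Finset.Icc (-mneg) mpos, (4 * |(i : ℝ)| / (2 * (k : ℝ) + 1)) * |b i| = 0 := by
      refine Finset.sum_eq_zero ?_
      intro i hi
      simp only [Finset.mem_Icc] at hi
      rw [habs, if_pos (by omega)]
      ring
    have e3 : ∑ i ∈ Finset.Icc (mpos+1) k, (4 * |(i : ℝ)| / (2 * (k : ℝ) + 1)) * |b i|
        = ∑ i ∈ Finset.Icc (mpos+1) k, (2 / (2 * (k:ℝ) + 1)) * (i:ℝ) := by
      refine Finset.sum_congr rfl ?_
      intro i hi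
      simp only [Finset.mem_Icc] at hi
      rw [habs, if_neg (by omega), abs_of_pos (by exact_mod_cast (show 0 < i by omega))]
      ring
    rw [e1, e2, e3, ← Finset.mul_sum, ← Finset.mul_sum,
      myGauss (-k) (-mneg-1) (by omega), myGauss (mpos+1) k (by omega)]
    have hden : (2 * (k:ℝ) + 1) ≠ 0 := by
      have : (1:ℝ) ≤ (k:ℝ) := by exact_mod_cast hk
      nlinarith
    push_cast
    field_simp
    ring
  have hS2 : (∑ j ∈ Finset.Icc (-k) k, |b j|) = (2 * (k:ℝ) - mneg - mpos) / 2 := by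
    rw [mySplit _ (-k) (-mneg-1) k (by omega) (by omega),
        show (-mneg - 1 + 1 : ℤ) = -mneg by ring,
        mySplit _ (-mneg) mpos k (by omega) (by omega)]
    have e1 : ∑ j ∈ Finset.Icc (-k) (-mneg-1), |b j| = ∑ _j ∈ Finset.Icc (-k) (-mneg-1), (1/2:ℝ) := by
      refine Finset.sum_congr rfl ?_
      intro i hi; simp only [Finset.mem_Icc] at hi
      rw [habs, if_neg (by omega)]
    have e2 : ∑ j ∈ Finset.Icc (-mneg) mpos, |b j| = 0 := by
      refine Finset.sum_eq_zero ?_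
      intro i hi; simp only [Finset.mem_Icc] at hi
      rw [habs, if_pos (by omega)]
    have e3 : ∑ j ∈ Finset.Icc (mpos+1) k, |b j| = ∑ _j ∈ Finset.Icc (mpos+1) k, (1/2:ℝ) := by
      refine Finset.sum_congr rfl ?_
      intro i hi; simp only [Finset.mem_Icc] at hi
      rw [habs, if_neg (by omega)]
    rw [e1, e2, e3, myConst _ _ _ (by omega), myConst _ _ _ (by omega)]
    push_cast
    ring
  have hP3 : (∑ j ∈ Finset.Icc 1 k,
        |b j| * (2 * (k : ℝ) + 1 - 2 * (j : ℝ)) * (|b (j - k - 1)| - |b (j - k)|))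
      = (2 * (mneg:ℝ) + 1) / 4 := by
    have key : ∀ j ∈ Finset.Icc 1 k,
        |b j| * (2 * (k : ℝ) + 1 - 2 * (j : ℝ)) * (|b (j - k - 1)| - |b (j - k)|)
        = if j = k - mneg then (2 * (mneg:ℝ) + 1) / 4 else 0 := by
      intro j hj
      simp only [Finset.mem_Icc] at hj
      rw [habs, habs, habs]
      by_cases hje : j = k - mneg
      · rw [if_pos hje, if_neg (by omega), if_neg (by omega), if_pos (by omega)]
        subst hje
        push_cast
        ring
      · rw [if_neg hje]
        by_cases h1 : -mneg ≤ j ∧ j ≤ mpos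
        · rw [if_pos h1]; ring
        · rw [if_neg h1]
          by_cases h2 : -mneg ≤ j - k - 1 ∧ j - k - 1 ≤ mpos
          · rw [if_pos h2, if_pos (by omega)]; ring
          · rw [if_neg h2, if_neg (by omega)]; ring
    rw [Finset.sum_congr rfl key,
      Finset.sum_ite_eq' (Finset.Icc 1 k) (k - mneg) (fun _ => (2 * (mneg:ℝ) + 1) / 4),
      if_pos (by simp only [Finset.mem_Icc]; omega)]
  have hP4 : (∑ j ∈ Finset.Icc (-k) (-1),
        |b j| * (2 * (k : ℝ) + 1 + 2 * (j : ℝ)) * (|b (j + k + 1)| - |b (j + k)|))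
      = (2 * (mpos:ℝ) + 1) / 4 := by
    have key : ∀ j ∈ Finset.Icc (-k) (-1),
        |b j| * (2 * (k : ℝ) + 1 + 2 * (j : ℝ)) * (|b (j + k + 1)| - |b (j + k)|)
        = if j = mpos - k then (2 * (mpos:ℝ) + 1) / 4 else 0 := by
      intro j hj
      simp only [Finset.mem_Icc] at hj
      rw [habs, habs, habs]
      by_cases hje : j = mpos - k
      · rw [if_pos hje, if_neg (by omega), if_neg (by omega), if_pos (by omega)]
        subst hje
        push_cast
        ring
      · rw [if_neg hje]
        by_cases h1 : -mneg ≤ j ∧ j ≤ mpos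
        · rw [if_pos h1]; ring
        · rw [if_neg h1]
          by_cases h2 : -mneg ≤ j + k + 1 ∧ j + k + 1 ≤ mpos
          · rw [if_pos h2, if_pos (by omega)]; ring
          · rw [if_neg h2, if_neg (by omega)]; ring
    rw [Finset.sum_congr rfl key,
      Finset.sum_ite_eq' (Finset.Icc (-k) (-1)) (mpos - k) (fun _ => (2 * (mpos:ℝ) + 1) / 4),
      if_pos (by simp only [Finset.mem_Icc]; omega)]
  have hden1 : (2 * (k:ℝ) + 1) ≠ 0 := by
    have : (1:ℝ) ≤ (k:ℝ) := by exact_mod_cast hk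
    nlinarith
  have hden2 : (2 * (k:ℝ) - mneg - mpos) ≠ 0 := by
    have h1 : (mneg:ℝ) + mpos + 1 ≤ (k:ℝ) := by exact_mod_cast hsum
    have h2 : (1:ℝ) ≤ (k:ℝ) := by exact_mod_cast hk
    nlinarith
  have hden2' : (2 * (k:ℝ) - mpos - mneg) ≠ 0 := by
    intro h; exact hden2 (by linarith)
  rw [phi, Phi, Dd, hS1, hS2, hP3, hP4,
    show (2:ℝ) * ((2 * (k:ℝ) - (mneg:ℝ) - (mpos:ℝ)) / 2) = 2 * (k:ℝ) - (mneg:ℝ) - (mpos:ℝ) from by ring,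
    div_eq_div_iff hden2 (mul_ne_zero (mul_ne_zero two_ne_zero hden1) hden2')]
  field_simp
  ring

end
end
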